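/- arXiv:1407.2563 — 3 statements merged into one kernel-verified Lean document; each statement's English description precedes it below -/
import Mathlib

section
/- Let z ∈ ℂ with 0 < |z| < 1 and Im z ≠ 0, and let w ∈ ℂ with w ≠ 0. Then the self-affine set E = { ∑_{n=0}^∞ aₙ zⁿ w : (aₙ) ∈ {0,1}^ℕ } ⊆ ℂ (the attractor of the iterated function system {x ↦ zx, x ↦ zx + w}, where multiplication by z = a + ib realizes the planar linear map with matrix [[a, b], [−b, a]]) is connected if and only if there exists f ∈ ℬ with f(z) = 0. -/
open Set Filter Topology

noncomputable section

/-- The function on `(-1,1)` defined by the power series with coefficient sequence `a`. -/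
def seriesFun (a : ℕ → ℝ) (x : ℝ) : ℝ := ∑' n, a n * x ^ n

/-- `a` is the coefficient sequence of a power series in the class `ℬ`:
constant term `1` and all other coefficients in `{-1, 0, 1}`. -/
def memB (a : ℕ → ℝ) : Prop :=
  a 0 = 1 ∧ ∀ n, 1 ≤ n → a n = -1 ∨ a n = 0 ∨ a n = 1

/-- `a` is the coefficient sequence of a power series in the class `ℬ_{[-1,1]}`:
constant term `1` and all other coefficients in `[-1, 1]`. -/
def memBI (a : ℕ → ℝ) : Prop :=
  a 0 = 1 ∧ ∀ n, 1 ≤ n → a n ∈ Set.Icc (-1 : ℝ) 1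

/-- `F` has at least `k` zeros in `(0, t]`, counted with multiplicity
(multiplicity = order of vanishing). -/
def hasZeros (F : ℝ → ℝ) (k : ℕ) (t : ℝ) : Prop :=
  ∃ (s : Finset ℝ) (d : ℝ → ℕ),
    (∀ x ∈ s, x ∈ Set.Ioc (0 : ℝ) t ∧ 1 ≤ d x ∧ ∀ j < d x, iteratedDeriv j F x = 0) ∧
    k ≤ ∑ x ∈ s, d x

/-- `ξ_k(F)`: the `k`-th zero of `F` in `(0,1)` counted with multiplicity,
with the convention `ξ_k(F) = 1` if there are fewer than `k` such zeros. -/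
def xi (k : ℕ) (F : ℝ → ℝ) : ℝ :=
  sInf (insert 1 {t | t ∈ Set.Ioo (0 : ℝ) 1 ∧ hasZeros F k t})

/-- `α₂`: the smallest double zero in `(0,1)` of a power series in `ℬ_{[-1,1]}`. -/
def alpha2 : ℝ :=
  sInf {x | x ∈ Set.Ioo (0 : ℝ) 1 ∧
    ∃ a, memBI a ∧ seriesFun a x = 0 ∧ deriv (seriesFun a) x = 0}

/-- `α₃`: the smallest triple zero in `(0,1)` of a power series in `ℬ_{[-1,1]}`. -/
def alpha3 : ℝ :=
  sInf {x | x ∈ Set.Ioo (0 : ℝ) 1 ∧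
    ∃ a, memBI a ∧ seriesFun a x = 0 ∧ deriv (seriesFun a) x = 0 ∧
      iteratedDeriv 2 (seriesFun a) x = 0}

/-- The set of values `ξ₂(f)` over `f ∈ ℬ_{[-1,1]}` with `f(γ) = 0`. -/
def phiSet (γ : ℝ) : Set ℝ :=
  {y | ∃ a, memBI a ∧ seriesFun a γ = 0 ∧ y = xi 2 (seriesFun a)}

/-- `φ(γ) = min { ξ₂(f) : f ∈ ℬ_{[-1,1]}, f(γ) = 0 }`. -/
def phi (γ : ℝ) : ℝ := sInf (phiSet γ)

/-- The set of values `ξ₃(f)` over `f ∈ ℬ_{[-1,1]}` with `f(γ) = 0`. -/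
def psiSet (γ : ℝ) : Set ℝ :=
  {y | ∃ a, memBI a ∧ seriesFun a γ = 0 ∧ y = xi 3 (seriesFun a)}

/-- `ψ(γ) = min { ξ₃(f) : f ∈ ℬ_{[-1,1]}, f(γ) = 0 }`. -/
def psi (γ : ℝ) : ℝ := sInf (psiSet γ)

/-- The `(*)`-function `h_k^{(a)}(x) = 1 - x - ⋯ - x^(k-1) + a x^k + x^(k+1)/(1-x)`. -/
def hstar (k : ℕ) (a : ℝ) (x : ℝ) : ℝ :=
  1 - ∑ i ∈ Finset.Ico 1 k, x ^ i + a * x ^ k + x ^ (k + 1) / (1 - x)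

/-- The `(**)`-function
`H_{k,ℓ}^{(a,b)}(x) = 1 - ∑_{i=1}^{k-1} x^i + a x^k + ∑_{i=k+1}^{ℓ-1} x^i + b x^ℓ - x^(ℓ+1)/(1-x)`. -/
def Hstar (k l : ℕ) (a b : ℝ) (x : ℝ) : ℝ :=
  1 - ∑ i ∈ Finset.Ico 1 k, x ^ i + a * x ^ k + ∑ i ∈ Finset.Ico (k + 1) l, x ^ i +
    b * x ^ l - x ^ (l + 1) / (1 - x)

/-- The set `𝒩₊`. -/
def Nplus : Set (ℝ × ℝ) :=
  {p | 0 < p.1 ∧ p.1 < p.2 ∧ p.2 < 1 ∧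
    ∃ a, memB a ∧ seriesFun a p.1 = 0 ∧ seriesFun a p.2 = 0}

/-- The set `𝒩̃₊`. -/
def NtildePlus : Set (ℝ × ℝ) :=
  {p | p ∈ Nplus ∧ ∃ a, memB a ∧ seriesFun a p.1 = 0 ∧ seriesFun a p.2 = 0 ∧
    hasZeros (seriesFun a) 3 p.2}

/-- The "trivial" part `𝒩_t` of the connectedness locus. -/
def Nt : Set (ℝ × ℝ) :=
  {p | p.1 ∈ Set.Ioo (-1 : ℝ) 1 ∧ p.2 ∈ Set.Ioo (-1 : ℝ) 1 ∧ 1 / 2 ≤ |p.1 * p.2|}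

/-- The region `Δ`. -/
def Delta : Set (ℝ × ℝ) :=
  {p | p.1 ∈ Set.Ioo (0 : ℝ) 1 ∧ p.2 ∈ Set.Ioo (0 : ℝ) 1 ∧ p.1 < p.2 ∧ p.1 * p.2 < 1 / 2}

/-!
After scaling by `w`, the set is the attractor `E` of the two contractions `x ↦ z x` and
`x ↦ z x + 1`, so `E` is the union of its two compact images. If `E` is connected these images
must meet. Conversely, if they meet, the Hutchinson iterates of a large closed ball are nested
compact connected sets shrinking to `E`, so `E` is connected. Finally a common point
`z ∑ aₙ zⁿ = z ∑ cₙ zⁿ + 1` with binary `aₙ, cₙ` is exactly a zero at `z` of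
`1 + ∑ (cₙ - aₙ) zⁿ⁺¹ ∈ ℬ`, because `{-1, 0, 1} = {0, 1} - {0, 1}`.
-/

open Metric
open scoped NNReal

theorem IsPreconnected.iInter_of_antitone {X : Type*} [TopologicalSpace X] [T2Space X]
    {K : ℕ → Set X} (hanti : Antitone K) (hcpt : ∀ n, IsCompact (K n))
    (hconn : ∀ n, IsPreconnected (K n)) : IsPreconnected (⋂ n, K n) := by
  have hC : IsCompact (⋂ n, K n) :=
    (hcpt 0).of_isClosed_subset (isClosed_iInter fun n => (hcpt n).isClosed) (iInter_subset K 0)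
  rw [isPreconnected_iff_subset_of_fully_disjoint_closed hC.isClosed]
  intro a b ha hb hcover hab
  obtain ⟨u, v, hu, hv, hau, hbv, huv⟩ := SeparatedNhds.of_isCompact_isCompact
    (hC.inter_right ha) (hC.inter_right hb) (hab.mono inter_subset_right inter_subset_right)
  have hCuv : ⋂ n, K n ⊆ u ∪ v := fun x hx =>
    (hcover hx).imp (fun hxa => hau ⟨hx, hxa⟩) (fun hxb => hbv ⟨hx, hxb⟩)
  obtain ⟨n, hn⟩ := exists_subset_nhds_of_isCompact hanti.directed_ge hcpt
    fun x hx => (hu.union hv).mem_nhds (hCuv hx)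
  rcases (hconn n).subset_or_subset hu hv huv hn with h | h
  · refine Or.inl fun x hx => (hcover hx).resolve_right fun hxb => ?_
    exact huv.notMem_of_mem_left (h (mem_iInter.1 hx n)) (hbv ⟨hx, hxb⟩)
  · refine Or.inr fun x hx => (hcover hx).resolve_left fun hxa => ?_
    exact huv.notMem_of_mem_left (hau ⟨hx, hxa⟩) (h (mem_iInter.1 hx n))

theorem LipschitzWith.image_cthickening_subset {X Y : Type*} [PseudoMetricSpace X]
    [PseudoMetricSpace Y] {K : ℝ≥0} {f : X → Y} (hf : LipschitzWith K f) {S : Set X}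
    (hS : IsCompact S) {r : ℝ} (hr : 0 ≤ r) :
    f '' cthickening r S ⊆ cthickening (K * r) (f '' S) := by
  rw [hS.cthickening_eq_biUnion_closedBall hr]
  rintro _ ⟨x, hx, rfl⟩
  obtain ⟨y, hy, hxy⟩ := mem_iUnion₂.1 hx
  refine mem_cthickening_of_dist_le _ (f y) _ _ (mem_image_of_mem f hy) ?_
  exact (hf.dist_le_mul x y).trans (mul_le_mul_of_nonneg_left hxy K.2)

section Hutchinson

variable {X : Type*} (f g : X → X)

def hutchinson (S : Set X) : Set X := f '' S ∪ g '' S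

variable {f g}

theorem hutchinson_mono : Monotone (hutchinson f g) :=
  fun _ _ h => union_subset_union (image_mono h) (image_mono h)

section Topology

variable [TopologicalSpace X]

theorem isCompact_hutchinson (hf : Continuous f) (hg : Continuous g) {S : Set X}
    (hS : IsCompact S) : IsCompact (hutchinson f g S) :=
  (hS.image hf).union (hS.image hg)

theorem isPreconnected_hutchinson (hf : Continuous f) (hg : Continuous g) {S : Set X}
    (hS : IsPreconnected S) (hmeet : (f '' S ∩ g '' S).Nonempty) :
    IsPreconnected (hutchinson f g S) :=
  IsPreconnected.union' hmeet (hS.image f hf.continuousOn) (hS.image g hg.continuousOn)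

end Topology

variable [MetricSpace X]

theorem hutchinson_cthickening_subset {K : ℝ≥0} (hf : LipschitzWith K f)
    (hg : LipschitzWith K g) {S : Set X} (hS : IsCompact S) {r : ℝ} (hr : 0 ≤ r) :
    hutchinson f g (cthickening r S) ⊆ cthickening (K * r) (hutchinson f g S) :=
  union_subset
    ((hf.image_cthickening_subset hS hr).trans
      (cthickening_subset_of_subset _ subset_union_left))
    ((hg.image_cthickening_subset hS hr).trans
      (cthickening_subset_of_subset _ subset_union_right))

theorem iterate_hutchinson_subset_cthickening {K : ℝ≥0} (hf : LipschitzWith K f)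
    (hg : LipschitzWith K g) {E B : Set X} (hE : IsCompact E) (hfix : hutchinson f g E = E)
    {r : ℝ} (hr : 0 ≤ r) (hBE : B ⊆ cthickening r E) (n : ℕ) :
    (hutchinson f g)^[n] B ⊆ cthickening ((K : ℝ) ^ n * r) E := by
  induction n with
  | zero => simpa using hBE
  | succ n ih =>
    calc (hutchinson f g)^[n + 1] B = hutchinson f g ((hutchinson f g)^[n] B) :=
          Function.iterate_succ_apply' _ n B
      _ ⊆ hutchinson f g (cthickening ((K : ℝ) ^ n * r) E) := hutchinson_mono ih
      _ ⊆ cthickening (K * ((K : ℝ) ^ n * r)) (hutchinson f g E) :=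
          hutchinson_cthickening_subset hf hg hE (by positivity)
      _ = cthickening ((K : ℝ) ^ (n + 1) * r) E := by rw [hfix, pow_succ]; ring_nf

theorem isPreconnected_of_hutchinson_eq {K : ℝ≥0} (hf : LipschitzWith K f)
    (hg : LipschitzWith K g) (hK : K < 1) {E B : Set X} (hE : IsCompact E)
    (hfix : hutchinson f g E = E) (hmeet : (f '' E ∩ g '' E).Nonempty) (hB : IsCompact B)
    (hBconn : IsPreconnected B) (hEB : E ⊆ B) (hBB : hutchinson f g B ⊆ B) {r : ℝ}
    (hr : 0 ≤ r) (hBE : B ⊆ cthickening r E) : IsPreconnected E := by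
  set F := hutchinson f g
  have hsucc (n : ℕ) : F^[n + 1] B = F (F^[n] B) := Function.iterate_succ_apply' F n B
  have hEK (n : ℕ) : E ⊆ F^[n] B :=
    Function.iterate_fixed hfix n ▸ hutchinson_mono.iterate n hEB
  have hanti : Antitone fun n => F^[n] B := antitone_nat_of_succ_le fun n => by
    rw [Function.iterate_succ_apply]
    exact hutchinson_mono.iterate n hBB
  have hcpt (n : ℕ) : IsCompact (F^[n] B) := by
    induction n with
    | zero => exact hB
    | succ n ih => rw [hsucc]; exact isCompact_hutchinson hf.continuous hg.continuous ih
  have hconn (n : ℕ) : IsPreconnected (F^[n] B) := by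
    induction n with
    | zero => exact hBconn
    | succ n ih =>
      rw [hsucc]
      exact isPreconnected_hutchinson hf.continuous hg.continuous ih
        (hmeet.mono (inter_subset_inter (image_mono (hEK n)) (image_mono (hEK n))))
  have hiInter : ⋂ n, F^[n] B = E := by
    refine subset_antisymm (fun x hx => ?_) (subset_iInter hEK)
    rw [← hE.isClosed.closure_eq, closure_eq_iInter_cthickening]
    refine mem_iInter₂.2 fun δ hδ => ?_
    have hlim : Tendsto (fun n => (K : ℝ) ^ n * r) atTop (𝓝 0) := by
      simpa using (tendsto_pow_atTop_nhds_zero_of_lt_one K.2 (by exact_mod_cast hK)).mul_const r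
    obtain ⟨n, hn⟩ := (hlim.eventually (gt_mem_nhds hδ)).exists
    exact cthickening_mono hn.le E
      (iterate_hutchinson_subset_cthickening hf hg hE hfix hr hBE n (mem_iInter.1 hx n))
  exact hiInter ▸ IsPreconnected.iInter_of_antitone hanti hcpt hconn

end Hutchinson

def binarySeqs : Set (ℕ → ℝ) := univ.pi fun _ => {0, 1}

def digitSum (z : ℂ) (a : ℕ → ℝ) : ℂ := ∑' n, (a n : ℂ) * z ^ n

def attractor (z : ℂ) : Set ℂ := digitSum z '' binarySeqs

def consSeq (d : ℝ) (a : ℕ → ℝ) : ℕ → ℝ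
  | 0 => d
  | n + 1 => a n

section DigitSum

variable {z : ℂ} {a b : ℕ → ℝ}

theorem isCompact_binarySeqs : IsCompact binarySeqs :=
  isCompact_univ_pi fun _ => (toFinite _).isCompact

theorem mem_binarySeqs : a ∈ binarySeqs ↔ ∀ n, a n = 0 ∨ a n = 1 := by
  simp [binarySeqs]

theorem abs_le_one_of_mem_binarySeqs (ha : a ∈ binarySeqs) (n : ℕ) : |a n| ≤ 1 := by
  rcases mem_binarySeqs.1 ha n with h | h <;> simp [h]

theorem consSeq_mem_binarySeqs {d : ℝ} (hd : d = 0 ∨ d = 1) (ha : a ∈ binarySeqs) :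
    consSeq d a ∈ binarySeqs :=
  mem_binarySeqs.2 fun | 0 => hd | n + 1 => mem_binarySeqs.1 ha n

theorem abs_le_one_of_memB (hb : memB b) (n : ℕ) : |b n| ≤ 1 := by
  rcases n with _ | n
  · simp [hb.1]
  · rcases hb.2 (n + 1) n.succ_pos with h | h | h <;> simp [h]

theorem norm_ofReal_mul_pow_le {x : ℝ} (hx : |x| ≤ 1) (n : ℕ) :
    ‖(x : ℂ) * z ^ n‖ ≤ ‖z‖ ^ n := by
  rw [norm_mul, norm_pow, Complex.norm_real, Real.norm_eq_abs]
  exact mul_le_of_le_one_left (by positivity) hx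

theorem summable_digitSum (hz : ‖z‖ < 1) (ha : ∀ n, |a n| ≤ 1) :
    Summable fun n => (a n : ℂ) * z ^ n :=
  .of_norm_bounded (summable_geometric_of_lt_one (norm_nonneg z) hz)
    fun n => norm_ofReal_mul_pow_le (ha n) n

theorem norm_digitSum_le (hz : ‖z‖ < 1) (ha : ∀ n, |a n| ≤ 1) :
    ‖digitSum z a‖ ≤ (1 - ‖z‖)⁻¹ :=
  tsum_of_norm_bounded (hasSum_geometric_of_lt_one (norm_nonneg z) hz)
    fun n => norm_ofReal_mul_pow_le (ha n) n

theorem continuousOn_digitSum (hz : ‖z‖ < 1) :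
    ContinuousOn (digitSum z) {a | ∀ n, |a n| ≤ 1} :=
  continuousOn_tsum (fun n => by fun_prop) (summable_geometric_of_lt_one (norm_nonneg z) hz)
    fun n _ ha => norm_ofReal_mul_pow_le (ha n) n

theorem digitSum_eq_add_mul (hz : ‖z‖ < 1) (hb : ∀ n, |b n| ≤ 1) :
    digitSum z b = b 0 + z * digitSum z (fun n => b (n + 1)) := by
  rw [digitSum, (summable_digitSum hz hb).tsum_eq_zero_add, digitSum, ← tsum_mul_left]
  simp only [pow_zero, mul_one, pow_succ]
  congr 1
  exact tsum_congr fun n => by ring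

theorem digitSum_consSeq (hz : ‖z‖ < 1) (d : ℝ) (hd : |d| ≤ 1) (ha : ∀ n, |a n| ≤ 1) :
    digitSum z (consSeq d a) = d + z * digitSum z a :=
  digitSum_eq_add_mul hz fun n => by cases n <;> simp [consSeq, hd, ha]

theorem digitSum_sub (hz : ‖z‖ < 1) {c : ℕ → ℝ} (ha : ∀ n, |a n| ≤ 1) (hc : ∀ n, |c n| ≤ 1) :
    digitSum z (c - a) = digitSum z c - digitSum z a := by
  rw [digitSum, digitSum, digitSum,
    ← (summable_digitSum hz hc).tsum_sub (summable_digitSum hz ha)]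
  exact tsum_congr fun n => by simp only [Pi.sub_apply]; push_cast; ring

end DigitSum

section Attractor

variable {z : ℂ}

theorem isCompact_attractor (hz : ‖z‖ < 1) : IsCompact (attractor z) :=
  isCompact_binarySeqs.image_of_continuousOn
    ((continuousOn_digitSum hz).mono fun _ ha => abs_le_one_of_mem_binarySeqs ha)

theorem zero_mem_attractor : (0 : ℂ) ∈ attractor z :=
  ⟨0, mem_binarySeqs.2 fun _ => .inl rfl, by simp [digitSum]⟩

theorem hutchinson_attractor (hz : ‖z‖ < 1) :
    hutchinson (z * ·) (z * · + 1) (attractor z) = attractor z := by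
  refine subset_antisymm ?_ ?_
  · rintro _ (⟨_, ⟨a, ha, rfl⟩, rfl⟩ | ⟨_, ⟨a, ha, rfl⟩, rfl⟩)
    · refine ⟨consSeq 0 a, consSeq_mem_binarySeqs (.inl rfl) ha, ?_⟩
      simp [digitSum_consSeq hz 0 (by norm_num) (abs_le_one_of_mem_binarySeqs ha)]
    · refine ⟨consSeq 1 a, consSeq_mem_binarySeqs (.inr rfl) ha, ?_⟩
      rw [digitSum_consSeq hz 1 (by norm_num) (abs_le_one_of_mem_binarySeqs ha)]
      push_cast
      ring
  · rintro _ ⟨a, ha, rfl⟩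
    have hshift : (fun n => a (n + 1)) ∈ binarySeqs :=
      mem_binarySeqs.2 fun n => mem_binarySeqs.1 ha (n + 1)
    rw [digitSum_eq_add_mul hz (abs_le_one_of_mem_binarySeqs ha)]
    rcases mem_binarySeqs.1 ha 0 with h | h
    · exact .inl ⟨_, ⟨_, hshift, rfl⟩, by simp [h]⟩
    · exact .inr ⟨_, ⟨_, hshift, rfl⟩, by simp [h, add_comm]⟩

theorem memB_iff_exists_sub {b : ℕ → ℝ} :
    memB b ↔ b 0 = 1 ∧ ∃ a ∈ binarySeqs, ∃ c ∈ binarySeqs, ∀ n, b (n + 1) = c n - a n := by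
  refine ⟨fun hb => ⟨hb.1, ?_⟩, ?_⟩
  · have (n : ℕ) : ∃ x y : ℝ, (x = 0 ∨ x = 1) ∧ (y = 0 ∨ y = 1) ∧ b (n + 1) = y - x := by
      rcases hb.2 (n + 1) n.succ_pos with h | h | h
      · exact ⟨1, 0, by norm_num [h]⟩
      · exact ⟨0, 0, by norm_num [h]⟩
      · exact ⟨0, 1, by norm_num [h]⟩
    choose a c ha hc hbac using this
    exact ⟨a, mem_binarySeqs.2 ha, c, mem_binarySeqs.2 hc, hbac⟩
  · rintro ⟨hb0, a, ha, c, hc, hbac⟩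
    refine ⟨hb0, fun n hn => ?_⟩
    obtain ⟨n, rfl⟩ := Nat.exists_eq_add_of_le' hn
    rw [hbac]
    rcases mem_binarySeqs.1 ha n with h | h <;> rcases mem_binarySeqs.1 hc n with h' | h' <;>
      norm_num [h, h']

theorem image_inter_nonempty_iff_exists_memB (hz : ‖z‖ < 1) :
    ((z * ·) '' attractor z ∩ (z * · + 1) '' attractor z).Nonempty ↔
      ∃ b, memB b ∧ digitSum z b = 0 := by
  constructor
  · rintro ⟨_, ⟨_, ⟨a, ha, rfl⟩, hac⟩, ⟨_, ⟨c, hc, rfl⟩, rfl⟩⟩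
    have hb : memB (consSeq 1 (c - a)) :=
      memB_iff_exists_sub.2 ⟨rfl, a, ha, c, hc, fun _ => rfl⟩
    refine ⟨_, hb, ?_⟩
    rw [digitSum_eq_add_mul hz (abs_le_one_of_memB hb)]
    change 1 + z * digitSum z (c - a) = 0
    rw [digitSum_sub hz (abs_le_one_of_mem_binarySeqs ha) (abs_le_one_of_mem_binarySeqs hc)]
    linear_combination -hac
  · rintro ⟨b, hb, hzero⟩
    obtain ⟨hb0, a, ha, c, hc, hbac⟩ := memB_iff_exists_sub.1 hb
    rw [digitSum_eq_add_mul hz (abs_le_one_of_memB hb), show (fun n => b (n + 1)) = c - a from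
      funext hbac, digitSum_sub hz (abs_le_one_of_mem_binarySeqs ha)
      (abs_le_one_of_mem_binarySeqs hc), hb0] at hzero
    refine ⟨_, ⟨_, ⟨a, ha, rfl⟩, rfl⟩, ⟨_, ⟨c, hc, rfl⟩, ?_⟩⟩
    push_cast at hzero
    linear_combination hzero

theorem lipschitzWith_mul_add (c : ℂ) : LipschitzWith ‖z‖₊ (z * · + c) :=
  LipschitzWith.of_dist_le_mul fun x y => by
    rw [dist_eq_norm, dist_eq_norm, add_sub_add_right_eq_sub, ← mul_sub, norm_mul, coe_nnnorm]

theorem isPreconnected_attractor (hz : ‖z‖ < 1)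
    (hmeet : ((z * ·) '' attractor z ∩ (z * · + 1) '' attractor z).Nonempty) :
    IsPreconnected (attractor z) := by
  have hz' : 0 < 1 - ‖z‖ := by linarith
  set R := (1 - ‖z‖)⁻¹ with hR_def
  have hR : 0 ≤ R := inv_nonneg.2 hz'.le
  have hball (c : ℂ) (hc : ‖c‖ ≤ 1) (x : ℂ) (hx : ‖x‖ ≤ R) : ‖z * x + c‖ ≤ R := calc
    ‖z * x + c‖ ≤ ‖z‖ * R + 1 := by
      grw [norm_add_le, norm_mul, hx, hc]
    _ = R := by rw [hR_def]; field_simp; ring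
  refine isPreconnected_of_hutchinson_eq (by simpa using lipschitzWith_mul_add (z := z) 0)
    (lipschitzWith_mul_add 1) (by exact_mod_cast hz) (isCompact_attractor hz)
    (hutchinson_attractor hz) hmeet (isCompact_closedBall 0 R)
    (convex_closedBall 0 R).isPreconnected ?_ ?_ hR ?_
  · rintro _ ⟨a, ha, rfl⟩
    exact mem_closedBall_zero_iff.2 (norm_digitSum_le hz (abs_le_one_of_mem_binarySeqs ha))
  · refine union_subset ?_ ?_ <;> rintro _ ⟨x, hx, rfl⟩ <;>
      rw [mem_closedBall_zero_iff] at hx ⊢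
    · simpa using hball 0 (by simp) x hx
    · exact hball 1 (by simp) x hx
  · exact (closedBall_subset_cthickening_singleton 0 R).trans
      (cthickening_subset_of_subset _ (singleton_subset_iff.2 zero_mem_attractor))

theorem isConnected_attractor_iff (hz : ‖z‖ < 1) :
    IsConnected (attractor z) ↔
      ((z * ·) '' attractor z ∩ (z * · + 1) '' attractor z).Nonempty := by
  have hcpt := isCompact_attractor hz
  refine ⟨fun h => ?_,
    fun hmeet => ⟨⟨0, zero_mem_attractor⟩, isPreconnected_attractor hz hmeet⟩⟩
  have hfix := hutchinson_attractor hz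
  have hf0 := mem_image_of_mem (z * ·) (zero_mem_attractor (z := z))
  have hg0 := mem_image_of_mem (z * · + 1) (zero_mem_attractor (z := z))
  exact (isPreconnected_closed_iff.1 h.2 _ _ (hcpt.image (by fun_prop)).isClosed
    (hcpt.image (by fun_prop)).isClosed hfix.ge ⟨_, hfix.le (Or.inl hf0), hf0⟩
    ⟨_, hfix.le (Or.inr hg0), hg0⟩).mono inter_subset_right

end Attractor

theorem stmt0_general (z : ℂ) (hz1 : ‖z‖ < 1) (w : ℂ) (hw : w ≠ 0) :
    IsConnected {p : ℂ | ∃ a : ℕ → ℝ, (∀ n, a n = 0 ∨ a n = 1) ∧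
        p = ∑' n, (a n : ℂ) * z ^ n * w} ↔
      ∃ b : ℕ → ℝ, memB b ∧ ∑' n, (b n : ℂ) * z ^ n = 0 := by
  have hset : {p : ℂ | ∃ a : ℕ → ℝ, (∀ n, a n = 0 ∨ a n = 1) ∧
      p = ∑' n, (a n : ℂ) * z ^ n * w} = (· * w) '' attractor z := by
    ext p
    simp [attractor, digitSum, mem_binarySeqs, tsum_mul_right, eq_comm]
  rw [hset]
  exact (Homeomorph.mulRight₀ w hw).isConnected_image.trans
    ((isConnected_attractor_iff hz1).trans (image_inter_nonempty_iff_exists_memB hz1))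

/-- For `z ∈ ℂ` with `0 < |z| < 1`, `Im z ≠ 0`, and `w ≠ 0`, the attractor
`E = { ∑ aₙ zⁿ w : aₙ ∈ {0,1} }` is connected iff some `f ∈ ℬ` vanishes at `z`. -/
theorem stmt0 (z : ℂ) (hz0 : 0 < ‖z‖) (hz1 : ‖z‖ < 1)
    (him : z.im ≠ 0) (w : ℂ) (hw : w ≠ 0) :
    IsConnected {p : ℂ | ∃ a : ℕ → ℝ, (∀ n, a n = 0 ∨ a n = 1) ∧
        p = ∑' n, (a n : ℂ) * z ^ n * w} ↔
      ∃ b : ℕ → ℝ, memB b ∧ ∑' n, (b n : ℂ) * z ^ n = 0 :=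
  stmt0_general z hz1 w hw
end
end

section
/- For every γ ∈ (1/2, α₂) there is exactly one function f ∈ ℬ_{[−1,1]} with f(γ) = f(φ(γ)) = 0. Moreover this f is a (*)-function, i.e. f = h_k^{(a)} for some integer k ≥ 1 and some a ∈ [−1,1], and it satisfies f′(γ) < 0 and f′(φ(γ)) > 0. -/
open Set Filter Topology

noncomputable section

/-!
Pick `k ≥ 1` and `a ∈ [-1, 1)` with `h_k^{(a)}(γ) = 0`. The numerator
`P(x) = (1 - x) h_k^{(a)}(x) = 1 - 2x + (1 + a) x^k + (1 - a) x^(k+1)` (`hstarNum k a`) is strictly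
convex on `[0, 1]`, positive on `[0, 1/2]`, and `P(1) = 1`. Along the chain
`h_1^{(1)}, …, h_1^{(-1)} = h_2^{(1)}, …, h_k^{(a)}` the numerators decrease pointwise and are all
`≥ 0` at `γ`; `h_1` has no zeros, so the first member to vanish somewhere in `(1/2, γ)` would
touch zero there, a double zero below `α₂`. Hence `P > 0` on `[0, γ)` and `γ` is the smaller of
the two zeros `γ < δ` of `P`.

The coefficients of `h_k^{(a)}` are extremal in `ℬ_{[-1,1]}` (`-1` before position `k`, `+1`
after), which gives `u^k (f - h)(v) ≤ v^k (f - h)(u)` for `0 < u < v < 1`, with equality at two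
points only if `f = h`. So every `f` vanishing at `γ` is positive on `(0, γ)` and negative on
`(γ, δ)`, whence `φ(γ) = δ` and `h_k^{(a)}` is the only function vanishing at both points.
-/

theorem memBI.abs_le_one {a : ℕ → ℝ} (ha : memBI a) (n : ℕ) : |a n| ≤ 1 := by
  rcases Nat.eq_zero_or_pos n with rfl | hn
  · simp [ha.1]
  · exact abs_le.2 (ha.2 n hn)

theorem summable_mul_pow_of_abs_le_one {a : ℕ → ℝ} (ha : ∀ n, |a n| ≤ 1) {x : ℝ} (hx : |x| < 1) :
    Summable fun n => a n * x ^ n := by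
  refine (summable_geometric_of_lt_one (abs_nonneg x) hx).of_norm_bounded fun n => ?_
  rw [norm_mul, norm_pow, Real.norm_eq_abs, Real.norm_eq_abs]
  exact mul_le_of_le_one_left (by positivity) (ha n)

def starCoeff (k : ℕ) (a : ℝ) (n : ℕ) : ℝ :=
  if n = 0 then 1 else if n < k then -1 else if n = k then a else 1

theorem starCoeff_memBI {k : ℕ} {a : ℝ} (ha : a ∈ Icc (-1 : ℝ) 1) : memBI (starCoeff k a) := by
  refine ⟨by simp [starCoeff], fun n hn => ?_⟩
  unfold starCoeff
  split_ifs <;> first | omega | exact ha | norm_num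

theorem hasSum_starCoeff {k : ℕ} (hk : 1 ≤ k) (a : ℝ) {x : ℝ} (hx : |x| < 1) :
    HasSum (fun n => starCoeff k a n * x ^ n) (hstar k a x) := by
  have htail : HasSum (fun n => starCoeff k a (n + (k + 1)) * x ^ (n + (k + 1)))
      (x ^ (k + 1) / (1 - x)) := by
    have hc : ∀ n, starCoeff k a (n + (k + 1)) = 1 := fun n => by
      simp only [starCoeff]; split_ifs <;> first | rfl | omega
    simp only [hc, one_mul, pow_add x _ (k + 1), div_eq_mul_inv]
    simpa only [mul_comm] using (hasSum_geometric_of_abs_lt_one hx).mul_left (x ^ (k + 1))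
  have hhead : ∑ n ∈ Finset.range (k + 1), starCoeff k a n * x ^ n
      = 1 - ∑ i ∈ Finset.Ico 1 k, x ^ i + a * x ^ k := by
    rw [Finset.sum_range_succ, Finset.range_eq_Ico, Finset.sum_eq_sum_Ico_succ_bot (by omega)]
    have hmid : ∀ i ∈ Finset.Ico 1 k, starCoeff k a i * x ^ i = -x ^ i := fun i hi => by
      rw [Finset.mem_Ico] at hi
      simp [starCoeff, hi.2, show i ≠ 0 by omega]
    rw [Finset.sum_congr rfl hmid, Finset.sum_neg_distrib]
    simp [starCoeff, show k ≠ 0 by omega]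
    ring
  have hrest : hstar k a x - (1 - ∑ i ∈ Finset.Ico 1 k, x ^ i + a * x ^ k)
      = x ^ (k + 1) / (1 - x) := by
    unfold hstar; ring
  rwa [← hasSum_nat_add_iff' (k + 1), hhead, hrest]

theorem seriesFun_starCoeff {k : ℕ} (hk : 1 ≤ k) (a : ℝ) {x : ℝ} (hx : |x| < 1) :
    seriesFun (starCoeff k a) x = hstar k a x :=
  (hasSum_starCoeff hk a hx).tsum_eq

def hstarNum (k : ℕ) (a x : ℝ) : ℝ := 1 - 2 * x + (1 + a) * x ^ k + (1 - a) * x ^ (k + 1)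

theorem hstar_eq_hstarNum_div {k : ℕ} (hk : 1 ≤ k) (a : ℝ) {x : ℝ} (hx : x ≠ 1) :
    hstar k a x = hstarNum k a x / (1 - x) := by
  have hx' : 1 - x ≠ 0 := sub_ne_zero.2 hx.symm
  rw [hstar, hstarNum, geom_sum_Ico hx hk]
  field_simp
  ring

theorem seriesFun_starCoeff_eq_hstarNum_div {k : ℕ} (hk : 1 ≤ k) (a : ℝ) {x : ℝ} (hx : |x| < 1) :
    seriesFun (starCoeff k a) x = hstarNum k a x / (1 - x) := by
  rw [seriesFun_starCoeff hk a hx, hstar_eq_hstarNum_div hk a (abs_lt.1 hx).2.ne]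

theorem hstarNum_at_one (k : ℕ) (a : ℝ) : hstarNum k a 1 = 1 := by
  simp only [hstarNum, one_pow]; ring

theorem hstarNum_succ_one (k : ℕ) : hstarNum (k + 1) 1 = hstarNum k (-1) := by
  funext x; simp only [hstarNum, pow_succ]; ring

theorem hstarNum_sub_hstarNum (k : ℕ) (s t x : ℝ) :
    hstarNum k t x - hstarNum k s x = (t - s) * (x ^ k * (1 - x)) := by
  simp only [hstarNum, pow_succ]; ring

theorem hstarNum_le_hstarNum {k : ℕ} {s t x : ℝ} (hst : s ≤ t) (hx0 : 0 ≤ x) (hx1 : x ≤ 1) :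
    hstarNum k s x ≤ hstarNum k t x := by
  rw [← sub_nonneg, hstarNum_sub_hstarNum]
  exact mul_nonneg (sub_nonneg.2 hst) (mul_nonneg (pow_nonneg hx0 k) (sub_nonneg.2 hx1))

theorem hstarNum_lt_hstarNum {k : ℕ} {s t x : ℝ} (hst : s < t) (hx0 : 0 < x) (hx1 : x < 1) :
    hstarNum k s x < hstarNum k t x := by
  rw [← sub_pos, hstarNum_sub_hstarNum]
  exact mul_pos (sub_pos.2 hst) (mul_pos (pow_pos hx0 k) (sub_pos.2 hx1))

theorem hstarNum_pos_of_le_half (k : ℕ) {a x : ℝ} (ha : a ∈ Icc (-1 : ℝ) 1) (hx0 : 0 ≤ x)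
    (hx : x ≤ 1 / 2) : 0 < hstarNum k a x := by
  have hpow : x ^ (k + 1) ≤ x ^ k := pow_le_pow_of_le_one hx0 (by linarith) k.le_succ
  have hmid : 0 ≤ (1 + a) * (x ^ k - x ^ (k + 1)) := mul_nonneg (by linarith [ha.1]) (by linarith)
  have hsplit :
      hstarNum k a x = (1 - 2 * x) + (1 + a) * (x ^ k - x ^ (k + 1)) + 2 * x ^ (k + 1) := by
    simp only [hstarNum]; ring
  rw [hsplit]
  rcases hx.lt_or_eq with hx | rfl
  · linarith [pow_nonneg hx0 (k + 1)]
  · linarith [pow_pos (by norm_num : (0 : ℝ) < 1 / 2) (k + 1)]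

theorem hstarNum_one_pos {a : ℝ} (ha : a ∈ Icc (-1 : ℝ) 1) (x : ℝ) : 0 < hstarNum 1 a x := by
  have : hstarNum 1 a x = 1 - (1 - a) * (x * (1 - x)) := by simp only [hstarNum]; ring
  rw [this]
  nlinarith [sq_nonneg (1 - 2 * x), ha.1, ha.2]

theorem continuous_hstarNum (k : ℕ) : Continuous fun p : ℝ × ℝ => hstarNum k p.1 p.2 := by
  unfold hstarNum; fun_prop

theorem differentiable_hstarNum (k : ℕ) (a : ℝ) : Differentiable ℝ (hstarNum k a) := by
  unfold hstarNum; fun_prop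

theorem StrictConvexOn.const_mul {s : Set ℝ} {f : ℝ → ℝ} {c : ℝ} (hc : 0 < c)
    (hf : StrictConvexOn ℝ s f) : StrictConvexOn ℝ s fun x => c * f x := by
  refine ⟨hf.1, fun x hx y hy hxy u v hu hv huv => ?_⟩
  have := mul_lt_mul_of_pos_left (hf.2 hx hy hxy hu hv huv) hc
  simp only [smul_eq_mul] at this ⊢
  linarith

theorem strictConvexOn_hstarNum {k : ℕ} (hk : 1 ≤ k) {a : ℝ} (ha : a ∈ Ico (-1 : ℝ) 1) :
    StrictConvexOn ℝ (Ici 0) (hstarNum k a) := by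
  have hlin : ConvexOn ℝ (Ici 0) fun x : ℝ => 1 - 2 * x :=
    ⟨convex_Ici 0, fun x _ y _ u v _ _ huv => le_of_eq (by
      simp only [smul_eq_mul]; linear_combination -huv)⟩
  have hk' : ConvexOn ℝ (Ici 0) fun x : ℝ => (1 + a) * x ^ k := by
    simpa only [smul_eq_mul] using (convexOn_pow k).smul (by linarith [ha.1] : (0 : ℝ) ≤ 1 + a)
  have hk1 : StrictConvexOn ℝ (Ici 0) fun x : ℝ => (1 - a) * x ^ (k + 1) :=
    (strictConvexOn_pow (by omega)).const_mul (by linarith [ha.2])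
  exact (hlin.add hk').add_strictConvexOn hk1

theorem hasDerivAt_seriesFun_starCoeff {k : ℕ} (hk : 1 ≤ k) {a x : ℝ} (hx : |x| < 1)
    (h0 : hstarNum k a x = 0) :
    HasDerivAt (seriesFun (starCoeff k a)) (deriv (hstarNum k a) x / (1 - x)) x := by
  have hx1 : 1 - x ≠ 0 := sub_ne_zero.2 (abs_lt.1 hx).2.ne'
  have hev : (fun y => hstarNum k a y / (1 - y)) =ᶠ[𝓝 x] seriesFun (starCoeff k a) := by
    filter_upwards [(isOpen_lt continuous_abs continuous_const).mem_nhds hx] with y hy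
    exact (seriesFun_starCoeff_eq_hstarNum_div hk a hy).symm
  have hd := (differentiable_hstarNum k a x).hasDerivAt.div ((hasDerivAt_id x).const_sub 1) hx1
  refine (hd.congr_deriv ?_).congr_of_eventuallyEq hev.symm
  simp only [h0, id]
  field_simp
  ring

theorem pow_mul_pow_lt_pow_mul_pow {u v : ℝ} (hu : 0 < u) (huv : u < v) {m n : ℕ} (hmn : m < n) :
    u ^ n * v ^ m < v ^ n * u ^ m := by
  obtain ⟨j, rfl⟩ := Nat.exists_eq_add_of_lt hmn
  have : u ^ (j + 1) < v ^ (j + 1) := pow_lt_pow_left₀ huv hu.le (by omega)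
  have : 0 < u ^ m * v ^ m := by have := hu.trans huv; positivity
  calc u ^ (m + j + 1) * v ^ m = u ^ m * v ^ m * u ^ (j + 1) := by ring
    _ < u ^ m * v ^ m * v ^ (j + 1) := by gcongr
    _ = v ^ (m + j + 1) * u ^ m := by ring

theorem pow_mul_pow_sub_ne_zero {u v : ℝ} (hu : 0 < u) (huv : u < v) {k n : ℕ} (hnk : n ≠ k) :
    v ^ k * u ^ n - u ^ k * v ^ n ≠ 0 := by
  rcases hnk.lt_or_gt with h | h
  · linarith [pow_mul_pow_lt_pow_mul_pow hu huv h]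
  · linarith [pow_mul_pow_lt_pow_mul_pow hu huv h]

/-- Below position `k` the coefficients of `starCoeff k a` are minimal in `ℬ_{[-1,1]}`, above it
maximal; the weights `v ^ k * u ^ n - u ^ k * v ^ n` change sign at `n = k` in the same way. -/
theorem starCoeff_sub_mul_nonneg {b : ℕ → ℝ} (hb : memBI b) (k : ℕ) (a : ℝ) {u v : ℝ}
    (hu : 0 < u) (huv : u < v) (n : ℕ) :
    0 ≤ (b n - starCoeff k a n) * (v ^ k * u ^ n - u ^ k * v ^ n) := by
  rcases lt_trichotomy n k with h | rfl | h
  · refine mul_nonneg ?_ (by linarith [pow_mul_pow_lt_pow_mul_pow hu huv h])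
    rcases Nat.eq_zero_or_pos n with rfl | hn
    · simp [starCoeff, hb.1]
    · simp only [starCoeff, hn.ne', h, if_true, if_false]
      linarith [(hb.2 n hn).1]
  · rw [mul_comm (v ^ n), sub_self, mul_zero]
  · refine mul_nonneg_of_nonpos_of_nonpos ?_ (by linarith [pow_mul_pow_lt_pow_mul_pow hu huv h])
    simp only [starCoeff, show n ≠ 0 by omega, show ¬n < k by omega, h.ne', if_false]
    linarith [(hb.2 n (by omega)).2]

theorem hasSum_sub_starCoeff_mul {k : ℕ} (hk : 1 ≤ k) (a : ℝ) {b : ℕ → ℝ} (hb : memBI b)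
    {x : ℝ} (hx : |x| < 1) :
    HasSum (fun n => (b n - starCoeff k a n) * x ^ n)
      (seriesFun b x - seriesFun (starCoeff k a) x) := by
  rw [seriesFun_starCoeff hk a hx]
  exact ((summable_mul_pow_of_abs_le_one hb.abs_le_one hx).hasSum.sub
    (hasSum_starCoeff hk a hx)).congr_fun fun n => sub_mul _ _ _

theorem hasSum_starCoeff_comparison {k : ℕ} (hk : 1 ≤ k) (a : ℝ) {b : ℕ → ℝ} (hb : memBI b)
    {u v : ℝ} (hu : 0 < u) (huv : u < v) (hv : v < 1) :
    HasSum (fun n => (b n - starCoeff k a n) * (v ^ k * u ^ n - u ^ k * v ^ n))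
      (v ^ k * (seriesFun b u - seriesFun (starCoeff k a) u) -
        u ^ k * (seriesFun b v - seriesFun (starCoeff k a) v)) := by
  have habs : ∀ x : ℝ, 0 < x → x < 1 → |x| < 1 := fun x h0 h1 => abs_lt.2 ⟨by linarith, h1⟩
  refine (((hasSum_sub_starCoeff_mul hk a hb (habs u hu (huv.trans hv))).mul_left (v ^ k)).sub
    ((hasSum_sub_starCoeff_mul hk a hb (habs v (hu.trans huv) hv)).mul_left (u ^ k))).congr_fun
    fun n => by ring

theorem pow_mul_sub_starCoeff_le {k : ℕ} (hk : 1 ≤ k) (a : ℝ) {b : ℕ → ℝ} (hb : memBI b)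
    {u v : ℝ} (hu : 0 < u) (huv : u < v) (hv : v < 1) :
    u ^ k * (seriesFun b v - seriesFun (starCoeff k a) v) ≤
      v ^ k * (seriesFun b u - seriesFun (starCoeff k a) u) :=
  sub_nonneg.1 <| (hasSum_starCoeff_comparison hk a hb hu huv hv).nonneg
    (starCoeff_sub_mul_nonneg hb k a hu huv)

theorem eq_starCoeff_of_seriesFun_eq {k : ℕ} (hk : 1 ≤ k) (a : ℝ) {b : ℕ → ℝ} (hb : memBI b)
    {u v : ℝ} (hu : 0 < u) (huv : u < v) (hv : v < 1)
    (hbu : seriesFun b u = seriesFun (starCoeff k a) u)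
    (hbv : seriesFun b v = seriesFun (starCoeff k a) v) : b = starCoeff k a := by
  have hzero := hasSum_starCoeff_comparison hk a hb hu huv hv
  rw [hbu, hbv, sub_self, sub_self, mul_zero, mul_zero, sub_self,
    hasSum_zero_iff_of_nonneg (starCoeff_sub_mul_nonneg hb k a hu huv)] at hzero
  have hne : ∀ n, n ≠ k → b n = starCoeff k a n := fun n hn =>
    sub_eq_zero.1 <| (mul_eq_zero.1 (congrFun hzero n)).resolve_right
      (pow_mul_pow_sub_ne_zero hu huv hn)
  have hsingle : HasSum (fun n => (b n - starCoeff k a n) * u ^ n)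
      ((b k - starCoeff k a k) * u ^ k) :=
    hasSum_single k fun n hn => by rw [hne n hn, sub_self, zero_mul]
  have hk0 := (hasSum_sub_starCoeff_mul hk a hb (abs_lt.2 ⟨by linarith, huv.trans hv⟩)).unique
    hsingle
  rw [hbu, sub_self, eq_comm, mul_eq_zero, sub_eq_zero] at hk0
  funext n
  rcases eq_or_ne n k with rfl | hn
  · exact hk0.resolve_right (pow_pos hu n).ne'
  · exact hne n hn

theorem eq_of_seriesFun_eq_zero_of_starCoeff {k : ℕ} (hk : 1 ≤ k) (a : ℝ) {b : ℕ → ℝ}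
    (hb : memBI b) {γ δ : ℝ} (hγ0 : 0 < γ) (hγδ : γ < δ) (hδ1 : δ ≤ 1)
    (hpos : ∀ x ∈ Ioo 0 γ, 0 < seriesFun (starCoeff k a) x)
    (hgγ : seriesFun (starCoeff k a) γ = 0) (hneg : ∀ x ∈ Ioo γ δ, seriesFun (starCoeff k a) x < 0)
    (hbγ : seriesFun b γ = 0) : ∀ x ∈ Ioo 0 δ, seriesFun b x = 0 → x = γ := by
  intro x hx hbx
  rcases lt_trichotomy x γ with hxγ | rfl | hγx
  · have hcmp := pow_mul_sub_starCoeff_le hk a hb hx.1 hxγ (hγδ.trans_le hδ1)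
    rw [hbγ, hgγ, hbx] at hcmp
    nlinarith [pow_pos hγ0 k, hpos x ⟨hx.1, hxγ⟩]
  · rfl
  · have hcmp := pow_mul_sub_starCoeff_le hk a hb hγ0 hγx (hx.2.trans_le hδ1)
    rw [hbγ, hgγ, hbx] at hcmp
    nlinarith [pow_pos hγ0 k, hneg x ⟨hγx, hx.2⟩]

theorem hasZeros_two_of_lt {F : ℝ → ℝ} {u v : ℝ} (hu : 0 < u) (huv : u < v) (hFu : F u = 0)
    (hFv : F v = 0) : hasZeros F 2 v := by
  classical
  refine ⟨{u, v}, fun _ => 1, fun x hx => ?_, by simp [Finset.card_pair huv.ne]⟩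
  simp only [Finset.mem_insert, Finset.mem_singleton] at hx
  rcases hx with rfl | rfl
  · exact ⟨⟨hu, huv.le⟩, le_rfl, fun j hj => by simpa [Nat.lt_one_iff.1 hj]⟩
  · exact ⟨⟨hu.trans huv, le_rfl⟩, le_rfl, fun j hj => by simpa [Nat.lt_one_iff.1 hj]⟩

theorem deriv_eq_zero_of_hasZeros_two {F : ℝ → ℝ} {t x₀ : ℝ} (h : hasZeros F 2 t)
    (huniq : ∀ x ∈ Ioc 0 t, F x = 0 → x = x₀) : deriv F x₀ = 0 := by
  obtain ⟨s, d, hs, hsum⟩ := h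
  have hsub : s ⊆ {x₀} := fun x hx => by
    have h0 := (hs x hx).2.2 0 (hs x hx).2.1
    rw [iteratedDeriv_zero] at h0
    exact Finset.mem_singleton.2 (huniq x (hs x hx).1 h0)
  rcases Finset.subset_singleton_iff.1 hsub with rfl | rfl
  · simp at hsum
  · rw [Finset.sum_singleton] at hsum
    simpa using (hs x₀ (Finset.mem_singleton_self x₀)).2.2 1 (by omega)

theorem xi_two_le {F : ℝ → ℝ} {u v : ℝ} (hu : 0 < u) (huv : u < v) (hv : v < 1) (hFu : F u = 0)
    (hFv : F v = 0) : xi 2 F ≤ v :=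
  csInf_le ⟨0, by rintro y (rfl | hy); exacts [zero_le_one, hy.1.1.le]⟩
    (mem_insert_of_mem _ ⟨⟨hu.trans huv, hv⟩, hasZeros_two_of_lt hu huv hFu hFv⟩)

theorem le_xi_two {F : ℝ → ℝ} {u v : ℝ} (hv : v ≤ 1) (huniq : ∀ x ∈ Ioo 0 v, F x = 0 → x = u)
    (hu : deriv F u ≠ 0) : v ≤ xi 2 F := by
  refine le_csInf (insert_nonempty _ _) ?_
  rintro t (rfl | ⟨-, ht⟩)
  · exact hv
  · by_contra! htv
    exact hu <| deriv_eq_zero_of_hasZeros_two ht fun x hx =>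
      huniq x ⟨hx.1, hx.2.trans_lt htv⟩

theorem alpha2_le_one : alpha2 ≤ 1 := by
  rw [alpha2]
  rcases eq_empty_or_nonempty {x | x ∈ Ioo (0 : ℝ) 1 ∧
      ∃ a, memBI a ∧ seriesFun a x = 0 ∧ deriv (seriesFun a) x = 0} with h | ⟨x, hx⟩
  · rw [h, Real.sInf_empty]; exact zero_le_one
  · exact (csInf_le ⟨0, fun _ hy => hy.1.1.le⟩ hx).trans hx.1.2.le

theorem deriv_seriesFun_ne_zero_of_lt_alpha2 {b : ℕ → ℝ} (hb : memBI b) {x : ℝ} (hx0 : 0 < x)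
    (hx : x < alpha2) (hbx : seriesFun b x = 0) : deriv (seriesFun b) x ≠ 0 := fun hder =>
  (csInf_le ⟨0, fun _ hy => hy.1.1.le⟩
    ⟨⟨hx0, hx.trans_le alpha2_le_one⟩, b, hb, hbx, hder⟩ : alpha2 ≤ x).not_gt hx

theorem IsCompact.forall_nonneg_of_continuous_family {f : ℝ → ℝ → ℝ} {K : Set ℝ} (hK : IsCompact K)
    (hf : Continuous fun p : ℝ × ℝ => f p.1 p.2) {a b : ℝ} (hab : a ≤ b)
    (hb : ∀ x ∈ K, 0 ≤ f b x)
    (hpos : ∀ t ∈ Ioc a b, (∀ x ∈ K, 0 ≤ f t x) → ∀ x ∈ K, 0 < f t x) :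
    ∀ x ∈ K, 0 ≤ f a x := by
  set A := Icc a b ∩ {t | ∀ x ∈ K, 0 ≤ f t x}
  have hA : IsClosed A := by
    refine isClosed_Icc.inter ?_
    simp only [ofPred_forall]
    exact isClosed_iInter fun x => isClosed_iInter fun _ =>
      isClosed_le continuous_const (hf.comp (continuous_id.prodMk continuous_const))
  have ht₀ : sInf A ∈ A := hA.csInf_mem ⟨b, ⟨hab, le_rfl⟩, hb⟩ ⟨a, fun _ ht => ht.1.1⟩
  rcases ht₀.1.1.eq_or_lt with ha | ha
  · exact ha ▸ ht₀.2
  have hnear : ∀ᶠ t in 𝓝 (sInf A), ∀ x ∈ K, 0 < f t x :=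
    hK.eventually_forall_of_forall_eventually fun x hx =>
      (hf.tendsto (sInf A, x)).eventually (lt_mem_nhds (hpos _ ⟨ha, ht₀.1.2⟩ ht₀.2 x hx))
  obtain ⟨t, hpos_t, hat, hlt⟩ :=
    ((eventually_nhdsWithin_of_eventually_nhds hnear).and (Ioo_mem_nhdsLT ha)).exists
  have htA : t ∈ A := ⟨⟨hat.le, hlt.le.trans ht₀.1.2⟩, fun x hx => (hpos_t x hx).le⟩
  exact absurd hlt (csInf_le ⟨a, fun _ ht => ht.1.1⟩ htA).not_gt

theorem deriv_hstarNum_ne_zero_of_lt_alpha2 {m : ℕ} (hm : 1 ≤ m) {t x : ℝ}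
    (ht : t ∈ Icc (-1 : ℝ) 1) (hx0 : 0 < x) (hx : x < alpha2) (h0 : hstarNum m t x = 0) :
    deriv (hstarNum m t) x ≠ 0 := by
  have hx1 : |x| < 1 := abs_lt.2 ⟨by linarith, hx.trans_le alpha2_le_one⟩
  intro hd
  refine deriv_seriesFun_ne_zero_of_lt_alpha2 (starCoeff_memBI (k := m) ht) hx0 hx ?_ ?_
  · rw [seriesFun_starCoeff_eq_hstarNum_div hm t hx1, h0, zero_div]
  · rw [(hasDerivAt_seriesFun_starCoeff hm hx1 h0).deriv, hd, zero_div]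

theorem exists_pow_succ_le_lt_pow {c y : ℝ} (hc0 : 0 < c) (hc1 : c < 1) (hy : y < 1) :
    ∃ k : ℕ, y ^ (k + 1) ≤ c ∧ c < y ^ k := by
  classical
  have hex : ∃ n : ℕ, y ^ (n + 1) ≤ c := by
    obtain ⟨n, hn⟩ := exists_pow_lt_of_lt_one hc0 hy
    have hn0 : n ≠ 0 := by rintro rfl; rw [pow_zero] at hn; linarith
    exact ⟨n - 1, by rw [Nat.sub_add_cancel (Nat.one_le_iff_ne_zero.2 hn0)]; exact hn.le⟩
  refine ⟨Nat.find hex, Nat.find_spec hex, ?_⟩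
  rcases h : Nat.find hex with _ | k
  · simpa using hc1
  · exact not_le.1 (Nat.find_min hex (by omega : k < Nat.find hex))

theorem exists_hstarNum_eq_zero {γ : ℝ} (hγ : γ ∈ Ioo (1 / 2 : ℝ) 1) :
    ∃ k, 1 ≤ k ∧ ∃ a ∈ Ico (-1 : ℝ) 1, hstarNum k a γ = 0 := by
  obtain ⟨hγ12, hγ1⟩ := hγ
  obtain ⟨k, hk1, hk⟩ := exists_pow_succ_le_lt_pow (by linarith : 0 < γ - 1 / 2) (by linarith) hγ1
  have hk0 : 1 ≤ k := Nat.one_le_iff_ne_zero.2 fun h => by subst h; linarith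
  have hden : 0 < γ ^ k * (1 - γ) := mul_pos (pow_pos (by linarith) k) (by linarith)
  have hsucc : γ ^ (k + 1) = γ ^ k * γ := pow_succ γ k
  refine ⟨k, hk0, (2 * γ - 1 - γ ^ k - γ ^ (k + 1)) / (γ ^ k * (1 - γ)), ⟨?_, ?_⟩, ?_⟩
  · rw [le_div_iff₀ hden]; nlinarith
  · rw [div_lt_one hden]; nlinarith
  · simp only [hstarNum]
    field_simp
    ring

section LtAlpha2

variable {γ : ℝ} (hγ : γ ∈ Ioo (1 / 2 : ℝ) alpha2)
include hγ

theorem hstarNum_pos_of_nonneg {m : ℕ} (hm : 1 ≤ m) {t : ℝ} (ht : t ∈ Icc (-1 : ℝ) 1)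
    (hnn : ∀ x ∈ Icc (1 / 2 : ℝ) γ, 0 ≤ hstarNum m t x) :
    ∀ x ∈ Ico (1 / 2 : ℝ) γ, 0 < hstarNum m t x := by
  intro x hx
  rcases hx.1.eq_or_lt with rfl | hx12
  · exact hstarNum_pos_of_le_half m ht (by norm_num) le_rfl
  refine (hnn x ⟨hx.1, hx.2.le⟩).lt_of_ne fun h0 => ?_
  refine deriv_hstarNum_ne_zero_of_lt_alpha2 hm ht (by linarith) (hx.2.trans hγ.2) h0.symm
    (IsLocalMin.deriv_eq_zero ?_)
  filter_upwards [Ioo_mem_nhds hx12 hx.2] with y hy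
  rw [← h0]
  exact hnn y ⟨hy.1.le, hy.2.le⟩

theorem hstarNum_nonneg_of_nonneg {k : ℕ} (hk : 1 ≤ k) :
    ∀ a ∈ Icc (-1 : ℝ) 1, 0 ≤ hstarNum k a γ → ∀ x ∈ Icc (1 / 2 : ℝ) γ, 0 ≤ hstarNum k a x := by
  have hγ0 : 0 < γ := by linarith [hγ.1]
  have hγ1 : γ < 1 := hγ.2.trans_le alpha2_le_one
  induction k, hk using Nat.le_induction with
  | base => exact fun a ha _ x _ => (hstarNum_one_pos ha x).le
  | succ k hk ih =>
    intro a ha hγa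
    refine isCompact_Icc.forall_nonneg_of_continuous_family (continuous_hstarNum (k + 1)) ha.2
      ?_ fun t ht hnn x hx => ?_
    · rw [hstarNum_succ_one]
      refine ih (-1) ⟨le_rfl, by norm_num⟩ ?_
      rw [← hstarNum_succ_one]
      exact hγa.trans (hstarNum_le_hstarNum ha.2 hγ0.le hγ1.le)
    · rcases hx.2.eq_or_lt with rfl | hxγ
      · exact hγa.trans_lt (hstarNum_lt_hstarNum ht.1 hγ0 hγ1)
      · exact hstarNum_pos_of_nonneg hγ (by omega) ⟨by linarith [ha.1, ht.1], ht.2⟩ hnn x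
          ⟨hx.1, hxγ⟩

theorem hstarNum_pos_of_lt {k : ℕ} (hk : 1 ≤ k) {a : ℝ} (ha : a ∈ Icc (-1 : ℝ) 1)
    (hγa : 0 ≤ hstarNum k a γ) : ∀ x ∈ Ico 0 γ, 0 < hstarNum k a x := by
  intro x hx
  rcases le_or_gt x (1 / 2) with hx12 | hx12
  · exact hstarNum_pos_of_le_half k ha hx.1 hx12
  · exact hstarNum_pos_of_nonneg hγ hk ha (hstarNum_nonneg_of_nonneg hγ hk a ha hγa) x
      ⟨hx12.le, hx.2⟩

theorem exists_second_zero_hstarNum {k : ℕ} (hk : 1 ≤ k) {a : ℝ} (ha : a ∈ Ico (-1 : ℝ) 1)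
    (h0 : hstarNum k a γ = 0) :
    ∃ δ ∈ Ioo γ 1, hstarNum k a δ = 0 ∧ (∀ x ∈ Ioo γ δ, hstarNum k a x < 0) ∧
      deriv (hstarNum k a) γ < 0 ∧ 0 < deriv (hstarNum k a) δ := by
  have hγ0 : 0 < γ := by linarith [hγ.1]
  have hγ1 : γ < 1 := hγ.2.trans_le alpha2_le_one
  have ha' : a ∈ Icc (-1 : ℝ) 1 := Ico_subset_Icc_self ha
  have hpos := hstarNum_pos_of_lt hγ hk ha' h0.ge
  obtain ⟨y, hγy, hy1, hy⟩ : ∃ y, γ < y ∧ y < 1 ∧ hstarNum k a y < 0 := by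
    by_contra! hnn
    refine deriv_hstarNum_ne_zero_of_lt_alpha2 hk ha' hγ0 hγ.2 h0 (IsLocalMin.deriv_eq_zero ?_)
    filter_upwards [Ioo_mem_nhds hγ0 hγ1] with x hx
    rw [h0]
    rcases lt_trichotomy x γ with hxγ | rfl | hxγ
    · exact (hpos x ⟨hx.1.le, hxγ⟩).le
    · exact h0.ge
    · exact hnn x hxγ hx.2
  obtain ⟨δ, ⟨hyδ, hδ1⟩, hδ⟩ := intermediate_value_Ioo hy1.le
    (differentiable_hstarNum k a).continuous.continuousOn
    ⟨hy, by rw [hstarNum_at_one]; exact one_pos⟩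
  have hγδ : γ < δ := hγy.trans hyδ
  have hconv := strictConvexOn_hstarNum hk ha
  have hγI : γ ∈ Ici (0 : ℝ) := hγ0.le
  have hδI : δ ∈ Ici (0 : ℝ) := hγI.trans hγδ.le
  refine ⟨δ, ⟨hγδ, hδ1⟩, hδ, fun x hx => ?_, ?_, ?_⟩
  · simpa [h0, hδ] using hconv.lt_on_openSegment hγI hδI hγδ.ne
      (by rwa [openSegment_eq_Ioo hγδ])
  · simpa [slope_def_field, h0, hδ] using
      hconv.deriv_lt_slope hγI hδI hγδ (differentiable_hstarNum k a γ)
  · simpa [slope_def_field, h0, hδ] using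
      hconv.slope_lt_deriv hγI hδI hγδ (differentiable_hstarNum k a δ)

theorem exists_second_zero_seriesFun_starCoeff {k : ℕ} (hk : 1 ≤ k) {a : ℝ}
    (ha : a ∈ Ico (-1 : ℝ) 1) (h0 : hstarNum k a γ = 0) :
    ∃ δ ∈ Ioo γ 1, (∀ x ∈ Ioo 0 γ, 0 < seriesFun (starCoeff k a) x) ∧
      seriesFun (starCoeff k a) γ = 0 ∧ (∀ x ∈ Ioo γ δ, seriesFun (starCoeff k a) x < 0) ∧
      seriesFun (starCoeff k a) δ = 0 ∧
      deriv (seriesFun (starCoeff k a)) γ < 0 ∧ 0 < deriv (seriesFun (starCoeff k a)) δ := by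
  obtain ⟨δ, ⟨hγδ, hδ1⟩, hδ, hneg, hdγ, hdδ⟩ := exists_second_zero_hstarNum hγ hk ha h0
  have hpos := hstarNum_pos_of_lt hγ hk (Ico_subset_Icc_self ha) h0.ge
  have hγ0 : 0 < γ := by linarith [hγ.1]
  have habs : ∀ x : ℝ, 0 < x → x < 1 → |x| < 1 := fun x hx0 hx1 => abs_lt.2 ⟨by linarith, hx1⟩
  have hg : ∀ x, 0 < x → x < 1 →
      seriesFun (starCoeff k a) x = hstarNum k a x / (1 - x) := fun x hx0 hx1 =>
    seriesFun_starCoeff_eq_hstarNum_div hk a (habs x hx0 hx1)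
  refine ⟨δ, ⟨hγδ, hδ1⟩, fun x hx => ?_, ?_, fun x hx => ?_, ?_, ?_, ?_⟩
  · rw [hg x hx.1 (by linarith [hx.2])]
    exact div_pos (hpos x ⟨hx.1.le, hx.2⟩) (by linarith [hx.2])
  · rw [hg γ hγ0 (by linarith), h0, zero_div]
  · rw [hg x (by linarith [hx.1]) (by linarith [hx.2])]
    exact div_neg_of_neg_of_pos (hneg x hx) (by linarith [hx.2])
  · rw [hg δ (by linarith) hδ1, hδ, zero_div]
  · rw [(hasDerivAt_seriesFun_starCoeff hk (habs γ hγ0 (by linarith)) h0).deriv]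
    exact div_neg_of_neg_of_pos hdγ (by linarith)
  · rw [(hasDerivAt_seriesFun_starCoeff hk (habs δ (by linarith) hδ1) hδ).deriv]
    exact div_pos hdδ (by linarith)

theorem phi_eq_of_starCoeff {k : ℕ} (hk : 1 ≤ k) {a : ℝ} (ha : a ∈ Icc (-1 : ℝ) 1) {δ : ℝ}
    (hγδ : γ < δ) (hδ1 : δ < 1) (hpos : ∀ x ∈ Ioo 0 γ, 0 < seriesFun (starCoeff k a) x)
    (hgγ : seriesFun (starCoeff k a) γ = 0) (hneg : ∀ x ∈ Ioo γ δ, seriesFun (starCoeff k a) x < 0)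
    (hgδ : seriesFun (starCoeff k a) δ = 0) : phi γ = δ := by
  have hγ0 : 0 < γ := by linarith [hγ.1]
  have hle : ∀ b, memBI b → seriesFun b γ = 0 → δ ≤ xi 2 (seriesFun b) := fun b hb hbγ =>
    le_xi_two hδ1.le
      (eq_of_seriesFun_eq_zero_of_starCoeff hk a hb hγ0 hγδ hδ1.le hpos hgγ hneg hbγ)
      (deriv_seriesFun_ne_zero_of_lt_alpha2 hb hγ0 hγ.2 hbγ)
  refine IsLeast.csInf_eq ⟨⟨starCoeff k a, starCoeff_memBI ha, hgγ, ?_⟩, ?_⟩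
  · exact le_antisymm (hle _ (starCoeff_memBI ha) hgγ) (xi_two_le hγ0 hγδ hδ1 hgγ hgδ)
  · rintro _ ⟨b, hb, hbγ, rfl⟩
    exact hle b hb hbγ

end LtAlpha2

/-- For `γ ∈ (1/2, α₂)` there is exactly one `f ∈ ℬ_{[-1,1]}` with
`f(γ) = f(φ(γ)) = 0`; moreover this `f` is a `(*)`-function `h_k^{(a)}` with `k ≥ 1`,
`a ∈ [-1,1]`, and `f'(γ) < 0`, `f'(φ(γ)) > 0`. -/
theorem stmt5 (γ : ℝ) (hγ : γ ∈ Set.Ioo (1 / 2 : ℝ) alpha2) :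
    ∃ a : ℕ → ℝ,
      (memBI a ∧ seriesFun a γ = 0 ∧ seriesFun a (phi γ) = 0) ∧
      (∀ a' : ℕ → ℝ, memBI a' → seriesFun a' γ = 0 → seriesFun a' (phi γ) = 0 → a' = a) ∧
      (∃ k : ℕ, 1 ≤ k ∧ ∃ c ∈ Set.Icc (-1 : ℝ) 1,
        Set.EqOn (seriesFun a) (hstar k c) (Set.Ioo (-1 : ℝ) 1)) ∧
      deriv (seriesFun a) γ < 0 ∧ 0 < deriv (seriesFun a) (phi γ) := by
  have hγ0 : 0 < γ := by linarith [hγ.1]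
  obtain ⟨k, hk, a, ha, h0⟩ := exists_hstarNum_eq_zero ⟨hγ.1, hγ.2.trans_le alpha2_le_one⟩
  obtain ⟨δ, ⟨hγδ, hδ1⟩, hpos, hgγ, hneg, hgδ, hdγ, hdδ⟩ :=
    exists_second_zero_seriesFun_starCoeff hγ hk ha h0
  have ha' : a ∈ Icc (-1 : ℝ) 1 := Ico_subset_Icc_self ha
  rw [phi_eq_of_starCoeff hγ hk ha' hγδ hδ1 hpos hgγ hneg hgδ]
  refine ⟨starCoeff k a, ⟨starCoeff_memBI ha', hgγ, hgδ⟩, fun b hb hbγ hbδ => ?_,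
    ⟨k, hk, a, ha', fun x hx => seriesFun_starCoeff hk a (abs_lt.2 hx)⟩, hdγ, hdδ⟩
  exact eq_starCoeff_of_seriesFun_eq hk a hb hγ0 hγδ hδ1 (hbγ.trans hgγ.symm) (hbδ.trans hgδ.symm)
end
end

section
/- If (γₙ, λₙ) ∈ 𝒩̃₊ for all n and (γₙ, λₙ) → (γ, λ) with (γ, λ) ∈ Δ, then (γ, λ) ∈ 𝒩̃₊. In other words, 𝒩̃₊ ∩ Δ is relatively closed in Δ. -/
/-!
For each `n` pick `fₙ ∈ ℬ` vanishing at `γₙ` and `λₙ` with three zeros `x₁ ≤ x₂ ≤ x₃` in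
`(0, λₙ]`, counted with multiplicity. A series in `ℬ` is positive on `[0, 1/2)`, so these zeros
lie in `[1/2, λₙ]`. The coefficient sequences of `ℬ` form a compact set in the product topology,
so along a subsequence `fₙ → f ∈ ℬ` coefficientwise and the zeros converge to `y₁ ≤ y₂ ≤ y₃`.
Coefficientwise convergence under a uniform polynomial bound on the coefficients gives
`fₙ⁽ʲ⁾(xₙ) → f⁽ʲ⁾(y)` whenever `xₙ → y ∈ (-1, 1)` (dominated convergence), so `f` vanishes at
`γ`, `λ` and the `yᵢ`. Multiplicities survive by Rolle: if two limits coincide, the zeros of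
`fₙ'` (or `fₙ''`) trapped between the corresponding zeros of `fₙ` converge to the same point.
-/

open Set Filter Topology

noncomputable section

def derivCoeff (a : ℕ → ℝ) (k : ℕ) : ℝ := (k + 1) * a (k + 1)

/-- `(k + m).descFactorial m = (k+1)(k+2)⋯(k+m)`: this bound passes to `derivCoeff a` with
`m + 1` and the same `C`, so all derivatives of the series are controlled by one constant. -/
def PolyBounded (C : ℝ) (m : ℕ) (a : ℕ → ℝ) : Prop :=
  ∀ k, |a k| ≤ C * (k + m).descFactorial m

section PolyBounded

variable {C : ℝ} {m : ℕ} {a : ℕ → ℝ}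

lemma polyBounded_derivCoeff (h : PolyBounded C m a) :
    PolyBounded C (m + 1) (derivCoeff a) := by
  intro k
  have hdesc : (k + (m + 1)).descFactorial (m + 1) = (k + 1) * (k + 1 + m).descFactorial m := by
    rw [Nat.descFactorial_succ, show k + (m + 1) = k + 1 + m by ring, Nat.add_sub_cancel]
  calc |derivCoeff a k| = (k + 1) * |a (k + 1)| := by
        rw [derivCoeff, abs_mul, abs_of_nonneg (by positivity)]
    _ ≤ (k + 1) * (C * (k + 1 + m).descFactorial m) := by gcongr; exact_mod_cast h (k + 1)
    _ = C * (k + (m + 1)).descFactorial (m + 1) := by rw [hdesc]; push_cast; ring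

lemma polyBounded_iterate_derivCoeff (h : PolyBounded C m a) (j : ℕ) :
    PolyBounded C (m + j) (derivCoeff^[j] a) := by
  induction j with
  | zero => exact h
  | succ j ih => rw [Function.iterate_succ_apply']; exact polyBounded_derivCoeff ih

lemma PolyBounded.summable (h : PolyBounded C m a) {x : ℝ} (hx : |x| < 1) :
    Summable fun k => a k * x ^ k := by
  refine Summable.of_norm_bounded
    ((summable_descFactorial_mul_geometric_of_norm_lt_one m (r := |x|) (by simpa)).mul_left C)
    fun k => ?_
  rw [norm_mul, norm_pow, Real.norm_eq_abs, ← mul_assoc]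
  exact mul_le_mul_of_nonneg_right (h k) (by positivity)

lemma PolyBounded.seriesFun_eq_add_tsum (h : PolyBounded C m a) {x : ℝ} (hx : |x| < 1) :
    seriesFun a x = a 0 + ∑' k, a (k + 1) * x ^ (k + 1) := by
  rw [seriesFun, (h.summable hx).tsum_eq_zero_add, pow_zero, mul_one]

lemma PolyBounded.hasDerivAt_seriesFun (h : PolyBounded C m a) {x : ℝ} (hx : |x| < 1) :
    HasDerivAt (seriesFun a) (seriesFun (derivCoeff a) x) x := by
  obtain ⟨r, hxr, hr⟩ := exists_between hx
  have hx_mem : x ∈ Ioo (-r) r := abs_lt.mp hxr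
  have hr_abs : |r| < 1 := by rwa [abs_of_nonneg ((abs_nonneg x).trans hxr.le)]
  have htail : HasDerivAt (fun y => ∑' k, a (k + 1) * y ^ (k + 1))
      (∑' k, derivCoeff a k * x ^ k) x := by
    have hsum : Summable fun k => a (k + 1) * x ^ (k + 1) :=
      (summable_nat_add_iff 1 (f := fun k => a k * x ^ k)).mpr (h.summable hx)
    refine hasDerivAt_tsum_of_isPreconnected (g := fun k y => a (k + 1) * y ^ (k + 1))
      (g' := fun k y => derivCoeff a k * y ^ k)
      ((summable_descFactorial_mul_geometric_of_norm_lt_one (m + 1) hr_abs).mul_left C)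
      isOpen_Ioo isPreconnected_Ioo (fun k y _ => ?_) (fun k y hy => ?_) hx_mem hsum hx_mem
    · refine ((hasDerivAt_pow (k + 1) y).const_mul (a (k + 1))).congr_deriv ?_
      rw [derivCoeff, Nat.add_sub_cancel]; push_cast; ring
    · simp only [norm_mul, norm_pow, Real.norm_eq_abs, ← mul_assoc]
      exact mul_le_mul (polyBounded_derivCoeff h k)
        (pow_le_pow_left₀ (abs_nonneg y) (abs_lt.mpr hy).le k) (by positivity)
        ((abs_nonneg _).trans (polyBounded_derivCoeff h k))
  have heq : seriesFun a =ᶠ[𝓝 x] fun y => a 0 + ∑' k, a (k + 1) * y ^ (k + 1) := by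
    filter_upwards [Ioo_mem_nhds (neg_lt_of_abs_lt hx) (lt_of_abs_lt hx)] with y hy
    exact h.seriesFun_eq_add_tsum (abs_lt.mpr hy)
  exact (htail.const_add (a 0)).congr_of_eventuallyEq heq

lemma PolyBounded.deriv_seriesFun (h : PolyBounded C m a) {x : ℝ} (hx : |x| < 1) :
    deriv (seriesFun a) x = seriesFun (derivCoeff a) x :=
  (h.hasDerivAt_seriesFun hx).deriv

lemma PolyBounded.iteratedDeriv_seriesFun (h : PolyBounded C m a) (j : ℕ) {x : ℝ}
    (hx : |x| < 1) : iteratedDeriv j (seriesFun a) x = seriesFun (derivCoeff^[j] a) x := by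
  induction j generalizing x with
  | zero => rfl
  | succ j ih =>
    have heq : iteratedDeriv j (seriesFun a) =ᶠ[𝓝 x] seriesFun (derivCoeff^[j] a) := by
      filter_upwards [Ioo_mem_nhds (neg_lt_of_abs_lt hx) (lt_of_abs_lt hx)] with y hy
      exact ih (abs_lt.mpr hy)
    rw [iteratedDeriv_succ, heq.deriv_eq, (polyBounded_iterate_derivCoeff h j).deriv_seriesFun hx,
      Function.iterate_succ_apply']

lemma PolyBounded.continuousOn_iteratedDeriv_seriesFun (h : PolyBounded C m a) (j : ℕ) :
    ContinuousOn (iteratedDeriv j (seriesFun a)) (Ioo (-1) 1) := by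
  intro x hx
  have hx : |x| < 1 := abs_lt.mpr hx
  refine ContinuousAt.continuousWithinAt ?_
  refine ((polyBounded_iterate_derivCoeff h j).hasDerivAt_seriesFun hx).continuousAt.congr ?_
  filter_upwards [Ioo_mem_nhds (neg_lt_of_abs_lt hx) (lt_of_abs_lt hx)] with y hy
  exact (h.iteratedDeriv_seriesFun j (abs_lt.mpr hy)).symm

end PolyBounded

section Limits

variable {α : Type*} {l : Filter α} {C : ℝ} {m : ℕ} {b : α → ℕ → ℝ} {c : ℕ → ℝ}

lemma polyBounded_of_tendsto [l.NeBot] (hb : ∀ i, PolyBounded C m (b i))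
    (hbc : ∀ k, Tendsto (fun i => b i k) l (𝓝 (c k))) : PolyBounded C m c :=
  fun k => le_of_tendsto' (hbc k).abs fun i => hb i k

lemma tendsto_iterate_derivCoeff (hbc : ∀ k, Tendsto (fun i => b i k) l (𝓝 (c k))) (j k : ℕ) :
    Tendsto (fun i => derivCoeff^[j] (b i) k) l (𝓝 (derivCoeff^[j] c k)) := by
  induction j generalizing k with
  | zero => exact hbc k
  | succ j ih =>
    simp only [Function.iterate_succ_apply', derivCoeff]
    exact (ih (k + 1)).const_mul _

lemma tendsto_seriesFun (hb : ∀ i, PolyBounded C m (b i))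
    (hbc : ∀ k, Tendsto (fun i => b i k) l (𝓝 (c k))) {x : α → ℝ} {y : ℝ}
    (hx : Tendsto x l (𝓝 y)) (hy : |y| < 1) :
    Tendsto (fun i => seriesFun (b i) (x i)) l (𝓝 (seriesFun c y)) := by
  obtain ⟨r, hyr, hr⟩ := exists_between hy
  have hr_abs : |r| < 1 := by rwa [abs_of_nonneg ((abs_nonneg y).trans hyr.le)]
  refine tendsto_tsum_of_dominated_convergence
    ((summable_descFactorial_mul_geometric_of_norm_lt_one m hr_abs).mul_left C)
    (fun k => (hbc k).mul (hx.pow k)) ?_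
  filter_upwards [hx.abs.eventually_lt_const hyr] with i hi k
  simp only [norm_mul, norm_pow, Real.norm_eq_abs, ← mul_assoc]
  exact mul_le_mul (hb i k) (pow_le_pow_left₀ (abs_nonneg _) hi.le k) (by positivity)
    ((abs_nonneg _).trans (hb i k))

lemma iteratedDeriv_seriesFun_eq_zero_of_tendsto [l.NeBot] (hb : ∀ i, PolyBounded C m (b i))
    (hbc : ∀ k, Tendsto (fun i => b i k) l (𝓝 (c k))) {x : α → ℝ} {y : ℝ}
    (hx : Tendsto x l (𝓝 y)) (hy : |y| < 1) {j : ℕ}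
    (hz : ∀ᶠ i in l, iteratedDeriv j (seriesFun (b i)) (x i) = 0) :
    iteratedDeriv j (seriesFun c) y = 0 := by
  rw [(polyBounded_of_tendsto hb hbc).iteratedDeriv_seriesFun j hy]
  refine tendsto_nhds_unique (tendsto_seriesFun (fun i => polyBounded_iterate_derivCoeff (hb i) j)
    (tendsto_iterate_derivCoeff hbc j) hx hy) (tendsto_const_nhds.congr' ?_)
  filter_upwards [hz, hx.abs.eventually_lt_const hy] with i hzi hxi
  rw [← (hb i).iteratedDeriv_seriesFun j hxi, hzi]

lemma seriesFun_eq_zero_of_tendsto [l.NeBot] (hb : ∀ i, PolyBounded C m (b i))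
    (hbc : ∀ k, Tendsto (fun i => b i k) l (𝓝 (c k))) {x : α → ℝ} {y : ℝ}
    (hx : Tendsto x l (𝓝 y)) (hy : |y| < 1) (hz : ∀ᶠ i in l, seriesFun (b i) (x i) = 0) :
    seriesFun c y = 0 := by
  simpa using iteratedDeriv_seriesFun_eq_zero_of_tendsto (j := 0) hb hbc hx hy (by simpa using hz)

lemma iteratedDeriv_seriesFun_eq_zero_of_squeeze [l.NeBot] (hb : ∀ i, PolyBounded C m (b i))
    (hbc : ∀ k, Tendsto (fun i => b i k) l (𝓝 (c k))) {u v : α → ℝ} {y : ℝ}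
    (hu : Tendsto u l (𝓝 y)) (hv : Tendsto v l (𝓝 y)) (hy : |y| < 1) {j : ℕ}
    (hz : ∀ᶠ i in l, ∃ z ∈ Icc (u i) (v i), iteratedDeriv j (seriesFun (b i)) z = 0) :
    iteratedDeriv j (seriesFun c) y = 0 := by
  obtain ⟨z, hz⟩ := hz.choice
  exact iteratedDeriv_seriesFun_eq_zero_of_tendsto hb hbc
    (tendsto_of_tendsto_of_tendsto_of_le_of_le' hu hv (hz.mono fun _ h => h.1.1)
      (hz.mono fun _ h => h.1.2)) hy (hz.mono fun _ h => h.2)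

end Limits

def IsZeroMultiset (F : ℝ → ℝ) (M : Multiset ℝ) : Prop :=
  ∀ x, ∀ j < M.count x, iteratedDeriv j F x = 0

lemma IsZeroMultiset.mono {F : ℝ → ℝ} {M N : Multiset ℝ} (hM : IsZeroMultiset F M)
    (hNM : N ≤ M) : IsZeroMultiset F N :=
  fun x j hj => hM x j (hj.trans_le (Multiset.count_le_of_le x hNM))

lemma hasZeros_iff_exists_multiset {F : ℝ → ℝ} {k : ℕ} {t : ℝ} :
    hasZeros F k t ↔ ∃ M : Multiset ℝ, k ≤ Multiset.card M ∧ (∀ x ∈ M, x ∈ Ioc 0 t) ∧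
      IsZeroMultiset F M := by
  constructor
  · rintro ⟨s, d, hs, hk⟩
    refine ⟨∑ x ∈ s, Multiset.replicate (d x) x, by simpa [Multiset.card_sum] using hk,
      fun x hx => ?_, fun x j hj => ?_⟩
    · obtain ⟨y, hy, hxy⟩ := Multiset.mem_sum.mp hx
      rw [Multiset.eq_of_mem_replicate hxy]
      exact (hs y hy).1
    · simp only [Multiset.count_sum', Multiset.count_replicate, Finset.sum_ite_eq'] at hj
      split_ifs at hj with hx
      · exact (hs x hx).2.2 j hj
      · exact absurd hj (Nat.not_lt_zero j)
  · rintro ⟨M, hk, hM, hF⟩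
    refine ⟨M.toFinset, M.count, fun x hx => ?_, by rwa [Multiset.toFinset_sum_count_eq]⟩
    rw [Multiset.mem_toFinset] at hx
    exact ⟨hM x hx, Multiset.count_pos.mpr hx, hF x⟩

structure IsZeroTriple (F : ℝ → ℝ) (x₁ x₂ x₃ : ℝ) : Prop where
  le₁₂ : x₁ ≤ x₂
  le₂₃ : x₂ ≤ x₃
  zero₁ : F x₁ = 0
  zero₂ : F x₂ = 0
  zero₃ : F x₃ = 0
  deriv₁₂ : x₁ = x₂ → deriv F x₁ = 0
  deriv₂₃ : x₂ = x₃ → deriv F x₂ = 0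
  deriv₁₃ : x₁ = x₃ → iteratedDeriv 2 F x₁ = 0

lemma isZeroTriple_iff {F : ℝ → ℝ} {x₁ x₂ x₃ : ℝ} :
    IsZeroTriple F x₁ x₂ x₃ ↔ x₁ ≤ x₂ ∧ x₂ ≤ x₃ ∧ IsZeroMultiset F {x₁, x₂, x₃} := by
  constructor
  · intro h
    refine ⟨h.le₁₂, h.le₂₃, fun x j hj => ?_⟩
    have h₁₃ : x₁ = x₃ → x₁ = x₂ := fun e => le_antisymm h.le₁₂ (e ▸ h.le₂₃)
    obtain ⟨_, _, z₁, z₂, z₃, d₁₂, d₂₃, d₁₃⟩ := h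
    simp only [Multiset.insert_eq_cons, Multiset.count_cons, Multiset.count_singleton] at hj
    split_ifs at hj <;> subst_vars <;> interval_cases j <;> simp_all [iteratedDeriv_one]
  · rintro ⟨h₁₂, h₂₃, hF⟩
    have hcount : ∀ x j, j < Multiset.count x {x₁, x₂, x₃} → iteratedDeriv j F x = 0 := hF
    simp only [Multiset.insert_eq_cons, Multiset.count_cons, Multiset.count_singleton] at hcount
    refine ⟨h₁₂, h₂₃, ?_, ?_, ?_, fun e => ?_, fun e => ?_, fun e => ?_⟩
    · simpa using hcount x₁ 0 (by simp)
    · simpa using hcount x₂ 0 (by simp)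
    · simpa using hcount x₃ 0 (by simp)
    · subst e; simpa using hcount x₁ 1 (by simp)
    · subst e; simpa using hcount x₂ 1 (by simp; omega)
    · obtain rfl : x₁ = x₂ := le_antisymm h₁₂ (e ▸ h₂₃)
      subst e
      exact hcount x₁ 2 (by simp)

lemma IsZeroMultiset.exists_isZeroTriple {F : ℝ → ℝ} {M : Multiset ℝ} (hF : IsZeroMultiset F M)
    (hM : 3 ≤ Multiset.card M) :
    ∃ x₁ x₂ x₃, {x₁, x₂, x₃} ≤ M ∧ IsZeroTriple F x₁ x₂ x₃ := by
  have hlen := Multiset.length_sort (s := M) (r := (· ≤ ·))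
  rcases hL : M.sort (· ≤ ·) with _ | ⟨x₁, _ | ⟨x₂, _ | ⟨x₃, rest⟩⟩⟩ <;>
    simp only [hL, List.length_nil, List.length_cons] at hlen <;> try omega
  have hsorted := Multiset.pairwise_sort M (· ≤ ·)
  rw [hL] at hsorted
  have hle : ({x₁, x₂, x₃} : Multiset ℝ) ≤ M := by
    rw [← Multiset.sort_eq M (· ≤ ·), hL]
    exact Multiset.coe_le.mpr (List.Sublist.subperm (by simp))
  refine ⟨x₁, x₂, x₃, hle, isZeroTriple_iff.mpr ⟨?_, ?_, hF.mono hle⟩⟩ <;> simp_all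

lemma hasZeros_three_iff {F : ℝ → ℝ} {t : ℝ} :
    hasZeros F 3 t ↔ ∃ x₁ x₂ x₃, 0 < x₁ ∧ x₃ ≤ t ∧ IsZeroTriple F x₁ x₂ x₃ := by
  rw [hasZeros_iff_exists_multiset]
  constructor
  · rintro ⟨M, hM, hMt, hF⟩
    obtain ⟨x₁, x₂, x₃, hle, h⟩ := hF.exists_isZeroTriple hM
    exact ⟨x₁, x₂, x₃, (hMt x₁ (Multiset.mem_of_le hle (by simp))).1,
      (hMt x₃ (Multiset.mem_of_le hle (by simp))).2, h⟩
  · rintro ⟨x₁, x₂, x₃, h₁, h₃, h⟩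
    obtain ⟨h₁₂, h₂₃, hF⟩ := isZeroTriple_iff.mp h
    refine ⟨{x₁, x₂, x₃}, by simp, fun x hx => ?_, hF⟩
    simp only [Multiset.insert_eq_cons, Multiset.mem_cons, Multiset.mem_singleton] at hx
    rcases hx with rfl | rfl | rfl <;> constructor <;> linarith

lemma exists_mem_Icc_deriv_eq_zero {f : ℝ → ℝ} {a b : ℝ} (hab : a ≤ b)
    (hf : ContinuousOn f (Icc a b)) (hfab : f a = f b) (hdf : a = b → deriv f a = 0) :
    ∃ c ∈ Icc a b, (a < b → c ∈ Ioo a b) ∧ deriv f c = 0 := by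
  rcases hab.eq_or_lt with rfl | hlt
  · exact ⟨a, left_mem_Icc.mpr le_rfl, fun h => absurd h (lt_irrefl a), hdf rfl⟩
  · obtain ⟨c, hc, hdc⟩ := exists_deriv_eq_zero hlt hf hfab
    exact ⟨c, Ioo_subset_Icc_self hc, fun _ => hc, hdc⟩

namespace IsZeroTriple

variable {F : ℝ → ℝ} {x₁ x₂ x₃ : ℝ}

lemma exists_deriv_eq_zero (h : IsZeroTriple F x₁ x₂ x₃) (hF : ContinuousOn F (Icc x₁ x₃)) :
    ∃ c ∈ Icc x₁ x₂, ∃ c' ∈ Icc x₂ x₃, (c = c' → x₁ = x₃) ∧ deriv F c = 0 ∧ deriv F c' = 0 := by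
  obtain ⟨c, hc, hc_lt, hdc⟩ := exists_mem_Icc_deriv_eq_zero h.le₁₂
    (hF.mono (Icc_subset_Icc_right h.le₂₃)) (h.zero₁.trans h.zero₂.symm) h.deriv₁₂
  obtain ⟨c', hc', hc'_lt, hdc'⟩ := exists_mem_Icc_deriv_eq_zero h.le₂₃
    (hF.mono (Icc_subset_Icc_left h.le₁₂)) (h.zero₂.trans h.zero₃.symm) h.deriv₂₃
  refine ⟨c, hc, c', hc', fun hcc' => ?_, hdc, hdc'⟩
  have h₁₂ : x₁ = x₂ := h.le₁₂.eq_of_not_lt fun hlt => (hc_lt hlt).2.not_ge (hcc' ▸ hc'.1)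
  have h₂₃ : x₂ = x₃ := h.le₂₃.eq_of_not_lt fun hlt => (hc'_lt hlt).1.not_ge (hcc' ▸ hc.2)
  exact h₁₂.trans h₂₃

lemma exists_iteratedDeriv_two_eq_zero (h : IsZeroTriple F x₁ x₂ x₃)
    (hF : ContinuousOn F (Icc x₁ x₃)) (hF' : ContinuousOn (deriv F) (Icc x₁ x₃)) :
    ∃ e ∈ Icc x₁ x₃, iteratedDeriv 2 F e = 0 := by
  obtain ⟨c, hc, c', hc', hcc', hdc, hdc'⟩ := h.exists_deriv_eq_zero hF
  have hsub : Icc c c' ⊆ Icc x₁ x₃ := Icc_subset_Icc hc.1 hc'.2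
  have hF'' : iteratedDeriv 2 F = deriv (deriv F) := by
    rw [iteratedDeriv_succ, iteratedDeriv_one]
  have hdeg : c = c' → deriv (deriv F) c = 0 := fun e => by
    have h₁₃ := hcc' e
    have hc₁ : c = x₁ := le_antisymm (h₁₃ ▸ hc.2.trans h.le₂₃) hc.1
    rw [hc₁, ← hF'']
    exact h.deriv₁₃ h₁₃
  obtain ⟨e, he, -, hde⟩ := exists_mem_Icc_deriv_eq_zero (hc.2.trans hc'.1) (hF'.mono hsub)
    (hdc.trans hdc'.symm) hdeg
  exact ⟨e, hsub he, hF'' ▸ hde⟩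

end IsZeroTriple

lemma isZeroTriple_seriesFun_of_tendsto {α : Type*} {l : Filter α} [l.NeBot] {C : ℝ} {m : ℕ}
    {b : α → ℕ → ℝ} {c : ℕ → ℝ} (hb : ∀ i, PolyBounded C m (b i))
    (hbc : ∀ k, Tendsto (fun i => b i k) l (𝓝 (c k))) {x₁ x₂ x₃ : α → ℝ} {y₁ y₂ y₃ : ℝ}
    (h₁ : Tendsto x₁ l (𝓝 y₁)) (h₂ : Tendsto x₂ l (𝓝 y₂)) (h₃ : Tendsto x₃ l (𝓝 y₃))
    (hy₁ : -1 < y₁) (hy₃ : y₃ < 1)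
    (h : ∀ᶠ i in l, IsZeroTriple (seriesFun (b i)) (x₁ i) (x₂ i) (x₃ i)) :
    IsZeroTriple (seriesFun c) y₁ y₂ y₃ := by
  have hle₁₂ : y₁ ≤ y₂ := le_of_tendsto_of_tendsto h₁ h₂ (h.mono fun _ hi => hi.le₁₂)
  have hle₂₃ : y₂ ≤ y₃ := le_of_tendsto_of_tendsto h₂ h₃ (h.mono fun _ hi => hi.le₂₃)
  have habs : ∀ y ∈ Icc y₁ y₃, |y| < 1 := fun y hy =>
    abs_lt.mpr ⟨hy₁.trans_le hy.1, hy.2.trans_lt hy₃⟩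
  have hcont : ∀ᶠ i in l, ∀ j,
      ContinuousOn (iteratedDeriv j (seriesFun (b i))) (Icc (x₁ i) (x₃ i)) := by
    filter_upwards [h₁.eventually (lt_mem_nhds hy₁), h₃.eventually (gt_mem_nhds hy₃)]
      with i hi₁ hi₃ j
    exact ((hb i).continuousOn_iteratedDeriv_seriesFun j).mono (Icc_subset_Ioo hi₁ hi₃)
  have hzero : ∀ {x : α → ℝ} {y : ℝ}, Tendsto x l (𝓝 y) → y ∈ Icc y₁ y₃ →
      (∀ᶠ i in l, seriesFun (b i) (x i) = 0) → seriesFun c y = 0 := fun hx hy =>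
    seriesFun_eq_zero_of_tendsto hb hbc hx (habs _ hy)
  have hrolle := (h.and hcont).mono fun i hi => hi.1.exists_deriv_eq_zero (by simpa using hi.2 0)
  refine ⟨hle₁₂, hle₂₃, hzero h₁ ⟨le_rfl, hle₁₂.trans hle₂₃⟩ (h.mono fun _ hi => hi.zero₁),
    hzero h₂ ⟨hle₁₂, hle₂₃⟩ (h.mono fun _ hi => hi.zero₂),
    hzero h₃ ⟨hle₁₂.trans hle₂₃, le_rfl⟩ (h.mono fun _ hi => hi.zero₃),
    fun e => ?_, fun e => ?_, fun e => ?_⟩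
  · rw [← iteratedDeriv_one]
    refine iteratedDeriv_seriesFun_eq_zero_of_squeeze hb hbc h₁ (e ▸ h₂)
      (habs _ ⟨le_rfl, hle₁₂.trans hle₂₃⟩) (hrolle.mono fun i hi => ?_)
    obtain ⟨z, hz, -, -, -, hdz, -⟩ := hi
    exact ⟨z, hz, by rwa [iteratedDeriv_one]⟩
  · rw [← iteratedDeriv_one]
    refine iteratedDeriv_seriesFun_eq_zero_of_squeeze hb hbc h₂ (e ▸ h₃)
      (habs _ ⟨hle₁₂, hle₂₃⟩) (hrolle.mono fun i hi => ?_)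
    obtain ⟨-, -, z, hz, -, -, hdz⟩ := hi
    exact ⟨z, hz, by rwa [iteratedDeriv_one]⟩
  · refine iteratedDeriv_seriesFun_eq_zero_of_squeeze hb hbc h₁ (e ▸ h₃)
      (habs _ ⟨le_rfl, hle₁₂.trans hle₂₃⟩) ((h.and hcont).mono fun i hi => ?_)
    exact hi.1.exists_iteratedDeriv_two_eq_zero (by simpa using hi.2 0)
      (by simpa using hi.2 1)

lemma seriesFun_pos {a : ℕ → ℝ} (h₀ : a 0 = 1) (ha : ∀ k, |a k| ≤ 1) {x : ℝ}
    (hx : |x| < 1 / 2) : 0 < seriesFun a x := by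
  have hx₁ : |x| < 1 := by linarith
  have htail : |∑' k, a (k + 1) * x ^ (k + 1)| ≤ |x| * (1 - |x|)⁻¹ := by
    rw [← Real.norm_eq_abs]
    refine tsum_of_norm_bounded ((hasSum_geometric_of_lt_one (abs_nonneg x) hx₁).mul_left |x|)
      fun k => ?_
    rw [norm_mul, norm_pow, Real.norm_eq_abs, Real.norm_eq_abs, pow_succ']
    exact mul_le_of_le_one_left (by positivity) (ha _)
  have hlt : |x| * (1 - |x|)⁻¹ < 1 := by
    rw [← div_eq_mul_inv, div_lt_one (by linarith)]
    linarith
  have hpb : PolyBounded 1 0 a := fun k => by simpa using ha k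
  rw [hpb.seriesFun_eq_add_tsum hx₁, h₀]
  linarith [(abs_le.mp htail).1]

lemma abs_le_one_of_memB_s10 {a : ℕ → ℝ} (ha : memB a) (k : ℕ) : |a k| ≤ 1 := by
  rcases k.eq_zero_or_pos with rfl | hk
  · simp [ha.1]
  · rcases ha.2 k hk with h | h | h <;> simp [h]

lemma polyBounded_of_memB {a : ℕ → ℝ} (ha : memB a) : PolyBounded 1 0 a :=
  fun k => by simpa using abs_le_one_of_memB_s10 ha k

lemma one_half_le_of_memB {a : ℕ → ℝ} (ha : memB a) {x : ℝ} (hx : 0 < x)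
    (hfx : seriesFun a x = 0) : 1 / 2 ≤ x := by
  by_contra! h
  exact (seriesFun_pos ha.1 (abs_le_one_of_memB_s10 ha) (by rwa [abs_of_pos hx])).ne' hfx

lemma IsZeroTriple.mem_Icc_of_memB {a : ℕ → ℝ} {x₁ x₂ x₃ : ℝ} (ha : memB a)
    (h : IsZeroTriple (seriesFun a) x₁ x₂ x₃) (hx₁ : 0 < x₁) (hx₃ : x₃ ≤ 1) :
    x₁ ∈ Icc (1 / 2) 1 ∧ x₂ ∈ Icc (1 / 2) 1 ∧ x₃ ∈ Icc (1 / 2) 1 := by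
  have := one_half_le_of_memB ha hx₁ h.zero₁
  have := h.le₁₂
  have := h.le₂₃
  exact ⟨⟨by linarith, by linarith⟩, ⟨by linarith, by linarith⟩, ⟨by linarith, hx₃⟩⟩

lemma isCompact_setOf_memB : IsCompact {a : ℕ → ℝ | memB a} := by
  refine (isCompact_univ_pi fun _ => isCompact_Icc (a := (-1 : ℝ)) (b := 1)).of_isClosed_subset
    ?_ fun a ha k _ => abs_le.mp (abs_le_one_of_memB_s10 ha k)
  have h : {a : ℕ → ℝ | memB a} =
      {a | a 0 = 1} ∩ ⋂ n, {a | 1 ≤ n → a n ∈ ({-1, 0, 1} : Set ℝ)} := by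
    ext a; simp [memB]
  rw [h]
  refine (isClosed_eq (continuous_apply 0) continuous_const).inter (isClosed_iInter fun n => ?_)
  by_cases hn : 1 ≤ n
  · simp only [hn, true_imp_iff]
    exact (Set.toFinite {-1, 0, 1}).isClosed.preimage (continuous_apply n)
  · simp [hn]

/-- `𝒩̃₊` is relatively closed in `Δ`: if `(γₙ, λₙ) ∈ 𝒩̃₊` converge to
`(γ, λ) ∈ Δ`, then `(γ, λ) ∈ 𝒩̃₊`. -/
theorem stmt10 (q : ℕ → ℝ × ℝ) (hq : ∀ n, q n ∈ NtildePlus) (p : ℝ × ℝ)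
    (hp : p ∈ Delta) (hlim : Tendsto q atTop (nhds p)) :
    p ∈ NtildePlus := by
  obtain ⟨⟨hp₁, -⟩, ⟨-, hp₂⟩, hp₁₂, -⟩ := hp
  choose A hA hA₁ hA₂ hzeros using fun n => (hq n).2
  choose x₁ x₂ x₃ hx₁ hx₃ htriple using fun n => hasZeros_three_iff.mp (hzeros n)
  have hmem : ∀ n, (A n, x₁ n, x₂ n, x₃ n) ∈
      {a | memB a} ×ˢ Icc (1 / 2 : ℝ) 1 ×ˢ Icc (1 / 2 : ℝ) 1 ×ˢ Icc (1 / 2 : ℝ) 1 := fun n =>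
    ⟨hA n, (htriple n).mem_Icc_of_memB (hA n) (hx₁ n) ((hx₃ n).trans (hq n).1.2.2.1.le)⟩
  obtain ⟨⟨a, y₁, y₂, y₃⟩, ⟨ha, hy₁, -, -⟩, φ, hφ, hlimφ⟩ := (isCompact_setOf_memB.prod
    (isCompact_Icc.prod (isCompact_Icc.prod isCompact_Icc))).tendsto_subseq hmem
  have hcoeff : ∀ k, Tendsto (fun n => A (φ n) k) atTop (𝓝 (a k)) := fun k =>
    ((continuous_apply k).tendsto a).comp hlimφ.fst_nhds
  have hqφ := hlim.comp hφ.tendsto_atTop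
  have hy₃ : y₃ ≤ p.2 := le_of_tendsto_of_tendsto' hlimφ.snd_nhds.snd_nhds.snd_nhds
    hqφ.snd_nhds fun n => hx₃ (φ n)
  have hpb := fun n => polyBounded_of_memB (hA (φ n))
  have hf := isZeroTriple_seriesFun_of_tendsto hpb hcoeff hlimφ.snd_nhds.fst_nhds
    hlimφ.snd_nhds.snd_nhds.fst_nhds hlimφ.snd_nhds.snd_nhds.snd_nhds (by linarith [hy₁.1])
    (hy₃.trans_lt hp₂) (Eventually.of_forall fun n => htriple (φ n))
  have hf₁ := seriesFun_eq_zero_of_tendsto hpb hcoeff hqφ.fst_nhds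
    (abs_lt.mpr ⟨by linarith, by linarith⟩) (Eventually.of_forall fun n => hA₁ (φ n))
  have hf₂ := seriesFun_eq_zero_of_tendsto hpb hcoeff hqφ.snd_nhds
    (abs_lt.mpr ⟨by linarith, hp₂⟩) (Eventually.of_forall fun n => hA₂ (φ n))
  exact ⟨⟨hp₁, hp₁₂, hp₂, a, ha, hf₁, hf₂⟩, a, ha, hf₁, hf₂,
    hasZeros_three_iff.mpr ⟨y₁, y₂, y₃, by linarith [hy₁.1], hy₃, hf⟩⟩
end
end
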